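/- arXiv:1107.0506 — 4 statements merged into one kernel-verified Lean document; each statement's English description precedes it below -/
import Mathlib

section
/- For every odd positive integer n ≥ 3, the n-th division polynomial ψ_n of y² = x³ + ax + b, viewed as a polynomial in x, has coefficient of x^{(n²−5)/2} equal to n(n²−1)(n²+6)a/60. -/
open WeierstrassCurve Polynomial

/-- The coefficient ring `ℤ[a,b]` with two indeterminates `a`, `b`. -/
abbrev Rab : Type := MvPolynomial Bool ℤ


open WeierstrassCurve Polynomial

namespace PsiAux

variable {R : Type*} [CommRing R]

lemma coeff_mul_one' (P Q : R[X]) : (P*Q).coeff 1 = P.coeff 0 * Q.coeff 1 + P.coeff 1 * Q.coeff 0 := by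
  rw [coeff_mul, Finset.Nat.sum_antidiagonal_eq_sum_range_succ_mk]
  simp [Finset.sum_range_succ]

lemma coeff_mul_two' (P Q : R[X]) :
    (P*Q).coeff 2 = P.coeff 0 * Q.coeff 2 + P.coeff 1 * Q.coeff 1 + P.coeff 2 * Q.coeff 0 := by
  rw [coeff_mul, Finset.Nat.sum_antidiagonal_eq_sum_range_succ_mk]
  simp [Finset.sum_range_succ]

lemma reflect_coeff (p : R[X]) {d i : ℕ} (h : i ≤ d) :
    (p.reflect d).coeff i = p.coeff (d - i) := by
  rw [coeff_reflect, revAt_le h]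

/-- Invariant: `p` has degree ≤ d, leading coefficient `c`, next coefficient `0`,
next-next coefficient `s * a`. -/
def Good (a : R) (p : R[X]) (d : ℕ) (c s : ℤ) : Prop :=
  p.natDegree ≤ d ∧ (p.reflect d).coeff 0 = (c : R) ∧ (p.reflect d).coeff 1 = 0 ∧
    (p.reflect d).coeff 2 = (s : R) * a

namespace Good

variable {a : R} {p q : R[X]} {dp dq : ℕ} {cp sp cq sq : ℤ}

lemma one : Good a (1 : R[X]) 0 1 0 := by
  refine ⟨by simp, ?_, ?_, ?_⟩ <;> simp [reflect_one, coeff_X_pow, coeff_one]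

lemma congr (h : Good a p dp cp sp) {d' : ℕ} {c' s' : ℤ}
    (hd : dp = d') (hc : cp = c') (hs : sp = s') : Good a p d' c' s' := by
  subst hd hc hs; exact h

lemma of_eq (h : Good a p dp cp sp) (hpq : p = q) : Good a q dp cp sp := hpq ▸ h

lemma mul (hp : Good a p dp cp sp) (hq : Good a q dq cq sq) :
    Good a (p * q) (dp + dq) (cp * cq) (cp * sq + sp * cq) := by
  obtain ⟨h1, h2, h3, h4⟩ := hp
  obtain ⟨k1, k2, k3, k4⟩ := hq
  refine ⟨natDegree_mul_le_of_le h1 k1, ?_, ?_, ?_⟩ <;>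
    rw [reflect_mul _ _ h1 k1]
  · rw [mul_coeff_zero, h2, k2]; push_cast; ring
  · rw [coeff_mul_one', h2, k2, h3, k3]; ring
  · rw [coeff_mul_two', h2, k2, h3, k3, h4, k4]; push_cast; ring

lemma sub (hp : Good a p dp cp sp) (hq : Good a q dp cq sq) :
    Good a (p - q) dp (cp - cq) (sp - sq) := by
  obtain ⟨h1, h2, h3, h4⟩ := hp
  obtain ⟨k1, k2, k3, k4⟩ := hq
  refine ⟨by simpa using natDegree_sub_le_of_le h1 k1, ?_, ?_, ?_⟩ <;>
    simp only [coeff_reflect] at * <;> simp only [coeff_sub, h2, h3, h4, k2, k3, k4] <;>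
    push_cast <;> ring

lemma pow (hp : Good a p dp cp sp) (k : ℕ) :
    Good a (p ^ k) (k * dp) (cp ^ k) (k * cp ^ (k - 1) * sp) := by
  induction k with
  | zero => exact one.congr (by ring) (by ring) (by ring) |>.of_eq (by rw [pow_zero])
  | succ k ih =>
    have := ih.mul hp
    refine (this.congr (by ring) (by ring) ?_).of_eq (by rw [pow_succ])
    rcases k with _ | k
    · norm_num
    · simp only [Nat.add_sub_cancel]; push_cast; ring

end Good



/-- Degree of `preΨ' n`. -/
def dE (n : ℕ) : ℕ := (n ^ 2 - if Even n then 4 else 1) / 2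

/-- Leading coefficient of `preΨ' n`. -/
def cE (n : ℕ) : ℤ := if Even n then (n : ℤ) / 2 else (n : ℤ)

/-- Coefficient of `a` in the sub-sub-leading coefficient of `preΨ' n`. -/
def sE (n : ℕ) : ℤ :=
  if Even n then ((n : ℤ) * ((n : ℤ) ^ 2 - 4) * ((n : ℤ) ^ 2 + 9)) / 120
  else ((n : ℤ) * ((n : ℤ) ^ 2 - 1) * ((n : ℤ) ^ 2 + 6)) / 60

lemma dvd60 (x : ℤ) : (60 : ℤ) ∣ x * (x ^ 2 - 1) * (x ^ 2 + 6) := by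
  have h : ∀ y : ZMod 60, y * (y ^ 2 - 1) * (y ^ 2 + 6) = 0 := by decide
  exact (ZMod.intCast_zmod_eq_zero_iff_dvd _ 60).mp (by push_cast; exact h x)

lemma dvd120 {x : ℤ} (hx : Even x) : (120 : ℤ) ∣ x * (x ^ 2 - 4) * (x ^ 2 + 9) := by
  obtain ⟨m, rfl⟩ := hx
  have h : ∀ y : ZMod 15, y * (y ^ 2 - 1) * (4 * y ^ 2 + 9) = 0 := by decide
  have h15 : (15 : ℤ) ∣ m * (m ^ 2 - 1) * (4 * m ^ 2 + 9) :=
    (ZMod.intCast_zmod_eq_zero_iff_dvd _ 15).mp (by push_cast; exact h m)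
  obtain ⟨k, hk⟩ := h15
  exact ⟨k, by linear_combination (8 : ℤ) * hk⟩

lemma cE_cast (n : ℕ) : ((cE n : ℤ) : ℚ) = if Even n then (n : ℚ) / 2 else (n : ℚ) := by
  rw [cE]; split_ifs with h
  · obtain ⟨m, rfl⟩ := h
    rw [Int.cast_div_charZero (by exact ⟨m, by push_cast; ring⟩)]; push_cast; ring
  · push_cast; ring

lemma sE_cast (n : ℕ) : ((sE n : ℤ) : ℚ) =
    if Even n then (n : ℚ) * ((n : ℚ) ^ 2 - 4) * ((n : ℚ) ^ 2 + 9) / 120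
    else (n : ℚ) * ((n : ℚ) ^ 2 - 1) * ((n : ℚ) ^ 2 + 6) / 60 := by
  rw [sE]; split_ifs with h
  · rw [Int.cast_div_charZero (dvd120 ((Int.even_coe_nat n).mpr h))]; push_cast; ring
  · rw [Int.cast_div_charZero (dvd60 _)]; push_cast; ring

lemma dE_cast {n : ℕ} (hn : n ≠ 0) : 2 * (dE n : ℤ) = n ^ 2 - if Even n then 4 else 1 := by
  rcases n.even_or_odd' with ⟨n, rfl | rfl⟩
  · rcases n with _ | n
    · contradiction
    push_cast [dE, show (2 * (n + 1)) ^ 2 = 2 * (2 * n * (n + 2)) + 4 by ring1, even_two_mul,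
      Nat.add_sub_cancel, Nat.mul_div_cancel_left _ two_pos]
    ring1
  · push_cast [dE, show (2 * n + 1) ^ 2 = 2 * (2 * n * (n + 1)) + 1 by ring1,
      n.not_even_two_mul_add_one, Nat.add_sub_cancel, Nat.mul_div_cancel_left _ two_pos]
    ring1

lemma dE_rec (m : ℕ) :
    (dE (2 * (m + 3)) = 2 * dE (m + 2) + dE (m + 3) + dE (m + 5) ∧
    dE (2 * (m + 3)) = dE (m + 1) + dE (m + 3) + 2 * dE (m + 4)) ∧
    (dE (2 * (m + 2) + 1) =
      dE (m + 4) + 3 * dE (m + 2) + (if Even m then 2 * 3 else 0) ∧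
    dE (2 * (m + 2) + 1) =
      dE (m + 1) + 3 * dE (m + 3) + (if Even m then 0 else 2 * 3)) := by
  push_cast [← @Nat.cast_inj ℤ, ← mul_left_cancel_iff_of_pos (b := (dE _ : ℤ)) two_pos,
    mul_add, mul_left_comm (2 : ℤ)]
  repeat rw [dE_cast <| by omega]
  push_cast [Nat.even_add_one, ite_not, even_two_mul]
  constructor <;> constructor <;> split_ifs <;> ring1


open WeierstrassCurve Polynomial

variable {R : Type*} [CommRing R]

lemma good_preΨ' (a b : R) (W : WeierstrassCurve R)
    (hW : W = { a₁ := 0, a₂ := 0, a₃ := 0, a₄ := a, a₆ := b }) (n : ℕ) :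
    Good a (W.preΨ' n) (dE n) (cE n) (sE n) := by
  have hb2 : W.b₂ = 0 := by simp [hW, WeierstrassCurve.b₂]
  have hb4 : W.b₄ = 2 * a := by simp [hW, WeierstrassCurve.b₄]
  have hb6 : W.b₆ = 4 * b := by simp [hW, WeierstrassCurve.b₆]
  have hb8 : W.b₈ = -(a ^ 2) := by simp [hW, WeierstrassCurve.b₈]
  have hP : W.Ψ₂Sq = C 4 * X ^ 3 + C (4 * a) * X + C (4 * b) := by
    rw [Ψ₂Sq, hb2, hb4, hb6]
    simp only [C_0, C_mul, map_ofNat]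
    ring1
  have gP : Good a W.Ψ₂Sq 3 4 4 := by
    refine ⟨?_, ?_, ?_, ?_⟩
    · rw [hP]; compute_degree
    all_goals rw [reflect_coeff _ (by norm_num)]
    all_goals simp only [hP, coeff_add, coeff_C_mul, coeff_X_pow, coeff_C, coeff_X]
    all_goals push_cast
    all_goals norm_num
  have hΨ₃ : W.Ψ₃ = C 3 * X ^ 4 + C (6 * a) * X ^ 2 + C (12 * b) * X + C (-(a ^ 2)) := by
    rw [Ψ₃, hb2, hb4, hb6, hb8]
    simp only [C_0, C_mul, C_neg, map_ofNat]
    ring1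
  have gΨ₃ : Good a W.Ψ₃ 4 3 6 := by
    refine ⟨?_, ?_, ?_, ?_⟩
    · rw [hΨ₃]; compute_degree
    all_goals rw [reflect_coeff _ (by norm_num)]
    all_goals simp only [hΨ₃, coeff_add, coeff_C_mul, coeff_X_pow, coeff_C, coeff_X]
    all_goals push_cast
    all_goals norm_num
  have hΨ₄ : W.preΨ₄ = C 2 * X ^ 6 + C (10 * a) * X ^ 4 + C (40 * b) * X ^ 3 +
      C (-(10 * a ^ 2)) * X ^ 2 + C (-(8 * a * b)) * X + C (-(2 * a ^ 3 + 16 * b ^ 2)) := by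
    rw [preΨ₄, hb2, hb4, hb6, hb8]
    simp only [C_0, C_mul, C_neg, C_add, C_sub, C_pow, map_ofNat]
    ring1
  have gΨ₄ : Good a W.preΨ₄ 6 2 10 := by
    refine ⟨?_, ?_, ?_, ?_⟩
    · rw [hΨ₄]; compute_degree
    all_goals rw [reflect_coeff _ (by norm_num)]
    all_goals simp only [hΨ₄, coeff_add, coeff_C_mul, coeff_X_pow, coeff_C, coeff_X]
    all_goals push_cast
    all_goals norm_num
  induction n using normEDSRec with
  | zero =>
    rw [preΨ'_zero]
    refine ⟨by simp, ?_, ?_, ?_⟩ <;> simp [dE, cE, sE, coeff_reflect]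
  | one =>
    rw [preΨ'_one]
    exact Good.one.congr (by decide) (by decide) (by decide)
  | two =>
    rw [preΨ'_two]
    exact Good.one.congr (by decide) (by decide) (by decide)
  | three =>
    rw [preΨ'_three]
    exact gΨ₃.congr (by decide) (by decide) (by decide)
  | four =>
    rw [preΨ'_four]
    exact gΨ₄.congr (by decide) (by decide) (by decide)
  | even m h1 h2 h3 h4 h5 =>
    have E1 := ((h2.pow 2).mul h3).mul h5
    have E2 := (h1.mul h3).mul (h4.pow 2)
    refine (((E1.congr ((dE_rec m).1.1).symm rfl rfl).sub
      (E2.congr ((dE_rec m).1.2).symm rfl rfl)).congr rfl ?_ ?_).of_eq (W.preΨ'_even m).symm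
    · rw [← @Int.cast_inj ℚ]
      push_cast [cE_cast, sE_cast]
      rcases Nat.even_or_odd m with hm' | hm'
      · rw [Nat.even_iff] at hm'
        simp only [eq_false (show ¬ Even (m+1) by rw [Nat.even_iff]; omega),
          eq_true (show Even (m+2) by rw [Nat.even_iff]; omega),
          eq_false (show ¬ Even (m+3) by rw [Nat.even_iff]; omega),
          eq_true (show Even (m+4) by rw [Nat.even_iff]; omega),
          eq_false (show ¬ Even (m+5) by rw [Nat.even_iff]; omega),
          eq_true (show Even (2*(m+3)) by rw [Nat.even_iff]; omega),
          eq_false (show ¬ Even (2*(m+2)+1) by rw [Nat.even_iff]; omega), if_true, if_false]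
        push_cast
        norm_num
        try ring1
      · rw [Nat.odd_iff] at hm'
        simp only [eq_true (show Even (m+1) by rw [Nat.even_iff]; omega),
          eq_false (show ¬ Even (m+2) by rw [Nat.even_iff]; omega),
          eq_true (show Even (m+3) by rw [Nat.even_iff]; omega),
          eq_false (show ¬ Even (m+4) by rw [Nat.even_iff]; omega),
          eq_true (show Even (m+5) by rw [Nat.even_iff]; omega),
          eq_true (show Even (2*(m+3)) by rw [Nat.even_iff]; omega),
          eq_false (show ¬ Even (2*(m+2)+1) by rw [Nat.even_iff]; omega), if_true, if_false]
        push_cast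
        norm_num
        try ring1
    · rw [← @Int.cast_inj ℚ]
      push_cast [cE_cast, sE_cast]
      rcases Nat.even_or_odd m with hm' | hm'
      · rw [Nat.even_iff] at hm'
        simp only [eq_false (show ¬ Even (m+1) by rw [Nat.even_iff]; omega),
          eq_true (show Even (m+2) by rw [Nat.even_iff]; omega),
          eq_false (show ¬ Even (m+3) by rw [Nat.even_iff]; omega),
          eq_true (show Even (m+4) by rw [Nat.even_iff]; omega),
          eq_false (show ¬ Even (m+5) by rw [Nat.even_iff]; omega),
          eq_true (show Even (2*(m+3)) by rw [Nat.even_iff]; omega),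
          eq_false (show ¬ Even (2*(m+2)+1) by rw [Nat.even_iff]; omega), if_true, if_false]
        push_cast
        norm_num
        try ring1
      · rw [Nat.odd_iff] at hm'
        simp only [eq_true (show Even (m+1) by rw [Nat.even_iff]; omega),
          eq_false (show ¬ Even (m+2) by rw [Nat.even_iff]; omega),
          eq_true (show Even (m+3) by rw [Nat.even_iff]; omega),
          eq_false (show ¬ Even (m+4) by rw [Nat.even_iff]; omega),
          eq_true (show Even (m+5) by rw [Nat.even_iff]; omega),
          eq_true (show Even (2*(m+3)) by rw [Nat.even_iff]; omega),
          eq_false (show ¬ Even (2*(m+2)+1) by rw [Nat.even_iff]; omega), if_true, if_false]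
        push_cast
        norm_num
        try ring1
  | odd m h1 h2 h3 h4 =>
    by_cases hm : Even m
    · have E1 := (h4.mul (h2.pow 3)).mul (gP.pow 2)
      have E2 := (h1.mul (h3.pow 3)).mul Good.one
      refine (((E1.congr ?_ rfl rfl).sub (E2.congr ?_ rfl rfl)).congr rfl ?_ ?_).of_eq ?_
      · rw [((dE_rec m).2.1), if_pos hm]
      · rw [((dE_rec m).2.2), if_pos hm]
      · rw [← @Int.cast_inj ℚ]
        push_cast [cE_cast, sE_cast]
        have hm' : m % 2 = 0 := Nat.even_iff.mp hm
        simp only [eq_false (show ¬ Even (m+1) by rw [Nat.even_iff]; omega),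
          eq_true (show Even (m+2) by rw [Nat.even_iff]; omega),
          eq_false (show ¬ Even (m+3) by rw [Nat.even_iff]; omega),
          eq_true (show Even (m+4) by rw [Nat.even_iff]; omega),
          eq_false (show ¬ Even (m+5) by rw [Nat.even_iff]; omega),
          eq_true (show Even (2*(m+3)) by rw [Nat.even_iff]; omega),
          eq_false (show ¬ Even (2*(m+2)+1) by rw [Nat.even_iff]; omega), if_true, if_false]
        push_cast
        norm_num
        try ring1
      · rw [← @Int.cast_inj ℚ]
        push_cast [cE_cast, sE_cast]
        have hm' : m % 2 = 0 := Nat.even_iff.mp hm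
        simp only [eq_false (show ¬ Even (m+1) by rw [Nat.even_iff]; omega),
          eq_true (show Even (m+2) by rw [Nat.even_iff]; omega),
          eq_false (show ¬ Even (m+3) by rw [Nat.even_iff]; omega),
          eq_true (show Even (m+4) by rw [Nat.even_iff]; omega),
          eq_false (show ¬ Even (m+5) by rw [Nat.even_iff]; omega),
          eq_true (show Even (2*(m+3)) by rw [Nat.even_iff]; omega),
          eq_false (show ¬ Even (2*(m+2)+1) by rw [Nat.even_iff]; omega), if_true, if_false]
        push_cast
        norm_num
        try ring1
      · rw [preΨ'_odd, if_pos hm, if_pos hm]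
    · have E1 := (h4.mul (h2.pow 3)).mul Good.one
      have E2 := (h1.mul (h3.pow 3)).mul (gP.pow 2)
      refine (((E1.congr ?_ rfl rfl).sub (E2.congr ?_ rfl rfl)).congr rfl ?_ ?_).of_eq ?_
      · rw [((dE_rec m).2.1), if_neg hm]
      · rw [((dE_rec m).2.2), if_neg hm]
      · rw [← @Int.cast_inj ℚ]
        push_cast [cE_cast, sE_cast]
        have hm' : m % 2 = 1 := Nat.odd_iff.mp (Nat.not_even_iff_odd.mp hm)
        simp only [eq_true (show Even (m+1) by rw [Nat.even_iff]; omega),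
          eq_false (show ¬ Even (m+2) by rw [Nat.even_iff]; omega),
          eq_true (show Even (m+3) by rw [Nat.even_iff]; omega),
          eq_false (show ¬ Even (m+4) by rw [Nat.even_iff]; omega),
          eq_true (show Even (m+5) by rw [Nat.even_iff]; omega),
          eq_true (show Even (2*(m+3)) by rw [Nat.even_iff]; omega),
          eq_false (show ¬ Even (2*(m+2)+1) by rw [Nat.even_iff]; omega), if_true, if_false]
        push_cast
        norm_num
        try ring1
      · rw [← @Int.cast_inj ℚ]
        push_cast [cE_cast, sE_cast]
        have hm' : m % 2 = 1 := Nat.odd_iff.mp (Nat.not_even_iff_odd.mp hm)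
        simp only [eq_true (show Even (m+1) by rw [Nat.even_iff]; omega),
          eq_false (show ¬ Even (m+2) by rw [Nat.even_iff]; omega),
          eq_true (show Even (m+3) by rw [Nat.even_iff]; omega),
          eq_false (show ¬ Even (m+4) by rw [Nat.even_iff]; omega),
          eq_true (show Even (m+5) by rw [Nat.even_iff]; omega),
          eq_true (show Even (2*(m+3)) by rw [Nat.even_iff]; omega),
          eq_false (show ¬ Even (2*(m+2)+1) by rw [Nat.even_iff]; omega), if_true, if_false]
        push_cast
        norm_num
        try ring1
      · rw [preΨ'_odd, if_neg hm, if_neg hm]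

end PsiAux


open PsiAux

/-- For odd `n ≥ 3`, the coefficient of `x^((n²-5)/2)` in the `n`-th division polynomial `ψₙ`
of `y² = x³ + ax + b` equals `n(n²-1)(n²+6)a/60` (the integer `n(n²-1)(n²+6)` is always
divisible by `60`).  For odd `n`, `WeierstrassCurve.preΨ n` is exactly `ψₙ` in `ℤ[a,b][x]`. -/
theorem psi_odd_second_coeff
    (a b : Rab) (ha : a = MvPolynomial.X true) (hb : b = MvPolynomial.X false)
    (W : WeierstrassCurve Rab)
    (hW : W = { a₁ := 0, a₂ := 0, a₃ := 0, a₄ := a, a₆ := b })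
    (n : ℕ) (hn : 3 ≤ n) (hodd : Odd n) :
    (W.preΨ (n : ℤ)).coeff ((n ^ 2 - 5) / 2) =
      ((n * (n ^ 2 - 1) * (n ^ 2 + 6) / 60 : ℕ) : Rab) * a := by
  obtain ⟨k, hk⟩ := hodd
  have hne : ¬ Even n := by rw [Nat.even_iff]; omega
  have hG := good_preΨ' a b W hW n
  have h4 := hG.2.2.2
  -- degree bookkeeping
  have hsq : n ^ 2 = 2 * (2 * (k * k) + 2 * k) + 1 := by subst hk; ring
  have hdE : dE n = 2 * (k * k) + 2 * k := by
    rw [dE, if_neg hne, hsq]; omega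
  have hd2 : 2 ≤ dE n := by rw [hdE]; nlinarith [hk]
  rw [reflect_coeff _ hd2] at h4
  have hidx : (n ^ 2 - 5) / 2 = dE n - 2 := by rw [hsq, hdE]; omega
  rw [preΨ_ofNat, hidx, h4]
  have hsq1 : 1 ≤ n ^ 2 := by nlinarith [hk]
  have h60 : (60 : ℕ) ∣ n * (n ^ 2 - 1) * (n ^ 2 + 6) := by
    have h := dvd60 (n : ℤ)
    have hcast : ((n * (n ^ 2 - 1) * (n ^ 2 + 6) : ℕ) : ℤ)
        = (n : ℤ) * ((n : ℤ) ^ 2 - 1) * ((n : ℤ) ^ 2 + 6) := by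
      push_cast [Nat.cast_sub hsq1]; ring
    exact_mod_cast hcast ▸ h
  have key : (sE n : ℤ) = ((n * (n ^ 2 - 1) * (n ^ 2 + 6) / 60 : ℕ) : ℤ) := by
    rw [← @Int.cast_inj ℚ, Int.cast_natCast, Nat.cast_div h60 (by norm_num : (60:ℚ) ≠ 0)]
    push_cast [sE_cast, if_neg hne, Nat.cast_sub hsq1]
    ring
  rw [key]
  norm_cast
end

section
/- For every positive integer n, the polynomial φ_n := x·ψ_n² − ψ_{n−1}ψ_{n+1} (after substituting y² = x³ + ax + b) is a monic polynomial in x of degree n², and its coefficient of x^{n²−2} equals −(n²(n²−1)/6)·a. -/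
set_option maxRecDepth 8000

open WeierstrassCurve Polynomial

namespace PhiAux


lemma zmod_dvd {N : ℕ} [NeZero N] (e : ℤ) (h : (e : ZMod N) = 0) : (N : ℤ) ∣ e :=
  (ZMod.intCast_zmod_eq_zero_iff_dvd e N).mp h

lemma d120 (y : ℤ) : (120 : ℤ) ∣ (2 * y) * ((2 * y) ^ 2 - 4) * ((2 * y) ^ 2 + 9) := by
  have h : ∀ z : ZMod 120, (2 * z) * ((2 * z) ^ 2 - 4) * ((2 * z) ^ 2 + 9) = 0 := by decide
  exact_mod_cast zmod_dvd _ (by push_cast; exact h y)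

lemma d60 (y : ℤ) :
    (60 : ℤ) ∣ (2 * y + 1) * ((2 * y + 1) ^ 2 - 1) * ((2 * y + 1) ^ 2 + 6) := by
  have h : ∀ z : ZMod 60, (2 * z + 1) * ((2 * z + 1) ^ 2 - 1) * ((2 * z + 1) ^ 2 + 6) = 0 := by
    decide
  exact_mod_cast zmod_dvd _ (by push_cast; exact h y)

lemma d420 (y : ℤ) : (420 : ℤ) ∣ (2 * y) * ((2 * y) ^ 6 + 14 * (2 * y) ^ 2 - 120) := by
  have h : ∀ z : ZMod 105, z * (8 * z ^ 6 + 7 * z ^ 2 - 15) = 0 := by decide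
  have h105 : (105 : ℤ) ∣ y * (8 * y ^ 6 + 7 * y ^ 2 - 15) :=
    mod_cast zmod_dvd _ (by push_cast; exact h y)
  obtain ⟨t, ht⟩ := h105
  exact ⟨4 * t, by linear_combination 16 * ht⟩

lemma d210 (y : ℤ) : (210 : ℤ) ∣
    (2 * y + 1) * ((2 * y + 1) ^ 2 - 1) * ((2 * y + 1) ^ 4 + (2 * y + 1) ^ 2 + 15) := by
  have h : ∀ z : ZMod 105,
      z * (z + 1) * (2 * z + 1) * (16 * z ^ 4 + 32 * z ^ 3 + 28 * z ^ 2 + 12 * z + 17) = 0 := by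
    decide
  have h105 : (105 : ℤ) ∣
      y * (y + 1) * (2 * y + 1) * (16 * y ^ 4 + 32 * y ^ 3 + 28 * y ^ 2 + 12 * y + 17) :=
    mod_cast zmod_dvd _ (by push_cast; exact h y)
  obtain ⟨t, ht⟩ := h105
  exact ⟨2 * t, by linear_combination 4 * ht⟩

lemma d6 (x : ℤ) : (6 : ℤ) ∣ x ^ 2 * (x ^ 2 - 1) := by
  have h : ∀ z : ZMod 6, z ^ 2 * (z ^ 2 - 1) = 0 := by decide
  exact_mod_cast zmod_dvd _ (by push_cast; exact h x)

lemma d15 (x : ℤ) : (15 : ℤ) ∣ 2 * x ^ 2 * (x ^ 4 - 1) := by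
  have h : ∀ z : ZMod 15, 2 * z ^ 2 * (z ^ 4 - 1) = 0 := by decide
  exact_mod_cast zmod_dvd _ (by push_cast; exact h x)


def c0 (n : ℕ) : ℤ := if Even n then (n : ℤ) / 2 else (n : ℤ)

def c2 (n : ℕ) : ℤ := if Even n then (n : ℤ) * ((n : ℤ) ^ 2 - 4) * ((n : ℤ) ^ 2 + 9) / 120
  else (n : ℤ) * ((n : ℤ) ^ 2 - 1) * ((n : ℤ) ^ 2 + 6) / 60

def c3 (n : ℕ) : ℤ := if Even n then (n : ℤ) * ((n : ℤ) ^ 6 + 14 * (n : ℤ) ^ 2 - 120) / 420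
  else (n : ℤ) * ((n : ℤ) ^ 2 - 1) * ((n : ℤ) ^ 4 + (n : ℤ) ^ 2 + 15) / 210

lemma c0_cast (n : ℕ) : ((c0 n : ℤ) : ℚ) = if Even n then (n : ℚ) / 2 else (n : ℚ) := by
  rcases n.even_or_odd' with ⟨k, rfl | rfl⟩
  · rw [c0, if_pos (even_two_mul k), if_pos (even_two_mul k),
      Int.cast_div_charZero ⟨(k : ℤ), by push_cast; ring⟩]
    push_cast; ring
  · rw [c0, if_neg k.not_even_two_mul_add_one, if_neg k.not_even_two_mul_add_one]
    push_cast; ring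

lemma c2_cast (n : ℕ) : ((c2 n : ℤ) : ℚ) =
    if Even n then (n : ℚ) * ((n : ℚ) ^ 2 - 4) * ((n : ℚ) ^ 2 + 9) / 120
    else (n : ℚ) * ((n : ℚ) ^ 2 - 1) * ((n : ℚ) ^ 2 + 6) / 60 := by
  rcases n.even_or_odd' with ⟨k, rfl | rfl⟩
  · rw [c2, if_pos (even_two_mul k), if_pos (even_two_mul k),
      show ((2 * k : ℕ) : ℤ) = 2 * (k : ℤ) by push_cast; ring,
      Int.cast_div_charZero (d120 k)]
    push_cast; ring
  · rw [c2, if_neg k.not_even_two_mul_add_one, if_neg k.not_even_two_mul_add_one,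
      show ((2 * k + 1 : ℕ) : ℤ) = 2 * (k : ℤ) + 1 by push_cast; ring,
      Int.cast_div_charZero (d60 k)]
    push_cast; ring

lemma c3_cast (n : ℕ) : ((c3 n : ℤ) : ℚ) =
    if Even n then (n : ℚ) * ((n : ℚ) ^ 6 + 14 * (n : ℚ) ^ 2 - 120) / 420
    else (n : ℚ) * ((n : ℚ) ^ 2 - 1) * ((n : ℚ) ^ 4 + (n : ℚ) ^ 2 + 15) / 210 := by
  rcases n.even_or_odd' with ⟨k, rfl | rfl⟩
  · rw [c3, if_pos (even_two_mul k), if_pos (even_two_mul k),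
      show ((2 * k : ℕ) : ℤ) = 2 * (k : ℤ) by push_cast; ring,
      Int.cast_div_charZero (d420 k)]
    push_cast; ring
  · rw [c3, if_neg k.not_even_two_mul_add_one, if_neg k.not_even_two_mul_add_one,
      show ((2 * k + 1 : ℕ) : ℤ) = 2 * (k : ℤ) + 1 by push_cast; ring,
      Int.cast_div_charZero (d210 k)]
    push_cast; ring


def expD (n : ℕ) : ℕ := (n ^ 2 - if Even n then 4 else 1) / 2

lemma expD_cast {n : ℕ} (hn : n ≠ 0) :
    2 * (expD n : ℤ) = n ^ 2 - if Even n then 4 else 1 := by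
  rcases n.even_or_odd' with ⟨n, rfl | rfl⟩
  · rcases n with _ | n
    · contradiction
    push_cast [expD, show (2 * (n + 1)) ^ 2 = 2 * (2 * n * (n + 2)) + 4 by ring1, even_two_mul,
      Nat.add_sub_cancel, Nat.mul_div_cancel_left _ two_pos]
    ring1
  · push_cast [expD, show (2 * n + 1) ^ 2 = 2 * (2 * n * (n + 1)) + 1 by ring1,
      n.not_even_two_mul_add_one, Nat.add_sub_cancel, Nat.mul_div_cancel_left _ two_pos]
    ring1

lemma expD_rec (m : ℕ) :
    (expD (2 * (m + 3)) = 2 * expD (m + 2) + expD (m + 3) + expD (m + 5) ∧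
    expD (2 * (m + 3)) = expD (m + 1) + expD (m + 3) + 2 * expD (m + 4)) ∧
    (expD (2 * (m + 2) + 1) =
      expD (m + 4) + 3 * expD (m + 2) + (if Even m then 2 * 3 else 0) ∧
    expD (2 * (m + 2) + 1) =
      expD (m + 1) + 3 * expD (m + 3) + (if Even m then 0 else 2 * 3)) := by
  push_cast [← @Nat.cast_inj ℤ, ← mul_left_cancel_iff_of_pos (b := (expD _ : ℤ)) two_pos,
    mul_add, mul_left_comm (2 : ℤ)]
  repeat rw [expD_cast <| by omega]
  push_cast [Nat.even_add_one, ite_not, even_two_mul]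
  constructor <;> constructor <;> split_ifs <;> ring1

lemma expD_phi (n : ℕ) :
    ((n + 2) ^ 2 = 1 + (expD (n + 2) + expD (n + 2)) + if Even (n + 1) then 0 else 3) ∧
    ((n + 2) ^ 2 = expD (n + 3) + expD (n + 1) + if Even (n + 1) then 3 else 0) := by
  have h1 := expD_cast (n := n + 2) (by omega)
  have h2 := expD_cast (n := n + 3) (by omega)
  have h3 := expD_cast (n := n + 1) (by omega)
  rcases Nat.even_or_odd n with hn | hn <;>
    [skip; replace hn : ¬ Even n := Nat.not_even_iff_odd.mpr hn] <;>
    simp only [Nat.even_add_one, not_not, hn, not_true, not_false_iff, if_true, if_false,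
      ite_true, ite_false] at h1 h2 h3 ⊢ <;>
    constructor <;> (rw [← @Nat.cast_inj ℤ]; push_cast at h1 h2 h3 ⊢; linarith [h1, h2, h3])



noncomputable def va : Rab := MvPolynomial.X true
noncomputable def vb : Rab := MvPolynomial.X false

noncomputable def W0 : WeierstrassCurve Rab :=
  { a₁ := 0, a₂ := 0, a₃ := 0, a₄ := va, a₆ := vb }

lemma hb₂ : W0.b₂ = 0 := by simp [WeierstrassCurve.b₂, W0]
lemma hb₄ : W0.b₄ = 2 * va := by simp [WeierstrassCurve.b₄, W0]
lemma hb₆ : W0.b₆ = 4 * vb := by simp [WeierstrassCurve.b₆, W0]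
lemma hb₈ : W0.b₈ = -(va ^ 2) := by simp [WeierstrassCurve.b₈, W0, sq]

noncomputable abbrev Sq : Type := AdjoinRoot ((X : Polynomial Rab) ^ 4)

noncomputable def pim : Polynomial Rab →+* Sq := AdjoinRoot.mk _
noncomputable def xi : Sq := AdjoinRoot.root _
noncomputable def al : Sq := pim (C va)
noncomputable def be : Sq := pim (C vb)

lemma hxi4 : xi ^ 4 = 0 := by
  have : pim ((X : Polynomial Rab) ^ 4) = 0 := AdjoinRoot.mk_self
  simpa [pim, xi, map_pow, AdjoinRoot.mk_X] using this

noncomputable def jt (g0 g2 g3 : ℤ) : Sq :=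
  (g0 : Sq) + (g2 : Sq) * al * xi ^ 2 + (g3 : Sq) * be * xi ^ 3

lemma jt_mul (g0 g2 g3 h0 h2 h3 : ℤ) :
    jt g0 g2 g3 * jt h0 h2 h3 = jt (g0 * h0) (g0 * h2 + g2 * h0) (g0 * h3 + g3 * h0) := by
  unfold jt
  push_cast
  linear_combination ((g2 : Sq) * (h2 : Sq) * al ^ 2 + ((g2 : Sq) * (h3 : Sq)
    + (g3 : Sq) * (h2 : Sq)) * al * be * xi + (g3 : Sq) * (h3 : Sq) * be ^ 2 * xi ^ 2) * hxi4

lemma jt_sub (g0 g2 g3 h0 h2 h3 : ℤ) :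
    jt g0 g2 g3 - jt h0 h2 h3 = jt (g0 - h0) (g2 - h2) (g3 - h3) := by
  unfold jt; push_cast; ring

lemma jt_congr {g0 g2 g3 h0 h2 h3 : ℤ} (e0 : g0 = h0) (e2 : g2 = h2) (e3 : g3 = h3) :
    jt g0 g2 g3 = jt h0 h2 h3 := by rw [e0, e2, e3]



lemma pim_X : pim X = xi := AdjoinRoot.mk_X

lemma rpsi2 : pim (reflect 3 W0.Ψ₂Sq) = jt 4 4 4 := by
  have h : W0.Ψ₂Sq = C (4 : Rab) * X ^ 3 + C (4 * va) * X ^ 1 + C (4 * vb) * X ^ 0 := by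
    rw [Ψ₂Sq, hb₂, hb₄, hb₆]; simp only [map_ofNat, map_mul, map_add, map_neg, map_sub, map_pow, map_zero, C_0, C_1]; ring1
  rw [h, reflect_add, reflect_add, reflect_C_mul_X_pow, reflect_C_mul_X_pow,
    reflect_C_mul_X_pow, show revAt 3 3 = 0 from rfl, show revAt 3 1 = 2 from rfl,
    show revAt 3 0 = 3 from rfl]
  simp only [map_add, map_mul, map_pow, map_neg, map_ofNat, map_one, pim_X, pow_zero, jt, al, be]
  push_cast
  ring

lemma rpsi3 : pim (reflect 4 W0.Ψ₃) = jt 3 6 12 := by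
  have h : W0.Ψ₃ = C (3 : Rab) * X ^ 4 + C (6 * va) * X ^ 2 + C (12 * vb) * X ^ 1 +
      C (-(va ^ 2)) * X ^ 0 := by
    rw [Ψ₃, hb₂, hb₄, hb₆, hb₈]; simp only [map_ofNat, map_mul, map_add, map_neg, map_sub, map_pow, map_zero, C_0, C_1]; ring1
  rw [h, reflect_add, reflect_add, reflect_add, reflect_C_mul_X_pow, reflect_C_mul_X_pow,
    reflect_C_mul_X_pow, reflect_C_mul_X_pow, show revAt 4 4 = 0 from rfl,
    show revAt 4 2 = 2 from rfl, show revAt 4 1 = 3 from rfl, show revAt 4 0 = 4 from rfl]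
  simp only [map_add, map_mul, map_pow, map_neg, map_ofNat, map_one, pim_X, pow_zero, jt, al, be]
  push_cast
  linear_combination (-(pim (C va) ^ 2)) * hxi4

lemma rpsi4 : pim (reflect 6 W0.preΨ₄) = jt 2 10 40 := by
  have h : W0.preΨ₄ = C (2 : Rab) * X ^ 6 + C (10 * va) * X ^ 4 + C (40 * vb) * X ^ 3 +
      C (-(10 * va ^ 2)) * X ^ 2 + C (-(8 * va * vb)) * X ^ 1 +
      C (-(2 * va ^ 3 + 16 * vb ^ 2)) * X ^ 0 := by
    rw [preΨ₄, hb₂, hb₄, hb₆, hb₈]; simp only [map_ofNat, map_mul, map_add, map_neg, map_sub, map_pow, map_zero, C_0, C_1]; ring1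
  rw [h, reflect_add, reflect_add, reflect_add, reflect_add, reflect_add,
    reflect_C_mul_X_pow, reflect_C_mul_X_pow, reflect_C_mul_X_pow, reflect_C_mul_X_pow,
    reflect_C_mul_X_pow, reflect_C_mul_X_pow, show revAt 6 6 = 0 from rfl,
    show revAt 6 4 = 2 from rfl, show revAt 6 3 = 3 from rfl, show revAt 6 2 = 4 from rfl,
    show revAt 6 1 = 5 from rfl, show revAt 6 0 = 6 from rfl]
  simp only [map_add, map_mul, map_pow, map_neg, map_ofNat, map_one, pim_X, pow_zero, jt, al, be]
  push_cast
  linear_combination (-(10 * pim (C va) ^ 2) - 8 * pim (C va) * pim (C vb) * xi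
    - (2 * pim (C va) ^ 3 + 16 * pim (C vb) ^ 2) * xi ^ 2) * hxi4

lemma reflect_sub' (f g : Rab[X]) (N : ℕ) :
    reflect N (f - g) = reflect N f - reflect N g := by
  ext i; simp [coeff_reflect]

lemma prm {f g : Rab[X]} {F G N : ℕ} (hf : f.natDegree ≤ F) (hg : g.natDegree ≤ G)
    (hN : N = F + G) : pim (reflect N (f * g)) = pim (reflect F f) * pim (reflect G g) := by
  subst hN; rw [reflect_mul f g hf hg, map_mul]

lemma bdd (k : ℕ) : (W0.preΨ' k).natDegree ≤ expD k := W0.natDegree_preΨ'_le k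

lemma inv_pre (n : ℕ) : pim (reflect (expD n) (W0.preΨ' n)) = jt (c0 n) (c2 n) (c3 n) := by
  induction n using normEDSRec with
  | zero =>
    rw [preΨ'_zero, reflect_zero, map_zero, show c0 0 = 0 from by decide,
      show c2 0 = 0 from by decide, show c3 0 = 0 from by decide]
    simp [jt]
  | one =>
    rw [preΨ'_one, reflect_one, show expD 1 = 0 from by decide, show c0 1 = 1 from by decide,
      show c2 1 = 0 from by decide, show c3 1 = 0 from by decide, pow_zero, map_one]
    simp [jt]
  | two =>
    rw [preΨ'_two, reflect_one, show expD 2 = 0 from by decide, show c0 2 = 1 from by decide,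
      show c2 2 = 0 from by decide, show c3 2 = 0 from by decide, pow_zero, map_one]
    simp [jt]
  | three =>
    rw [show expD 3 = 4 from by decide, preΨ'_three, rpsi3]
    exact jt_congr (by decide) (by decide) (by decide)
  | four =>
    rw [show expD 4 = 6 from by decide, preΨ'_four, rpsi4]
    exact jt_congr (by decide) (by decide) (by decide)
  | even m h1 h2 h3 h4 h5 =>
    have d21 : expD (2*(m+3)) = expD (m+2) + expD (m+2) + expD (m+3) + expD (m+5) := by
      have := (expD_rec m).1.1; omega
    have d22 : expD (2*(m+3)) = expD (m+1) + expD (m+3) + expD (m+4) + expD (m+4) := by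
      have := (expD_rec m).1.2; omega
    rw [preΨ'_even, reflect_sub', map_sub,
      show W0.preΨ' (m+2) ^ 2 * W0.preΨ' (m+3) * W0.preΨ' (m+5)
        = W0.preΨ' (m+2) * W0.preΨ' (m+2) * W0.preΨ' (m+3) * W0.preΨ' (m+5) by ring,
      show W0.preΨ' (m+1) * W0.preΨ' (m+3) * W0.preΨ' (m+4) ^ 2
        = W0.preΨ' (m+1) * W0.preΨ' (m+3) * W0.preΨ' (m+4) * W0.preΨ' (m+4) by ring,
      prm (natDegree_mul_le_of_le (natDegree_mul_le_of_le (bdd _) (bdd _)) (bdd _)) (bdd _) d21,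
      prm (natDegree_mul_le_of_le (bdd _) (bdd _)) (bdd _) rfl,
      prm (bdd _) (bdd _) rfl,
      prm (natDegree_mul_le_of_le (natDegree_mul_le_of_le (bdd _) (bdd _)) (bdd _)) (bdd _) d22,
      prm (natDegree_mul_le_of_le (bdd _) (bdd _)) (bdd _) rfl,
      prm (bdd _) (bdd _) rfl,
      h1, h2, h3, h4, h5]
    simp only [jt_mul, jt_sub]
    have pN : Even (2*(m+3)) := even_two_mul _
    rcases Nat.even_or_odd m with hm | hm
    · have key : m % 2 = 0 := Nat.even_iff.mp hm
      have p1 : ¬ Even (m+1) := by rw [Nat.even_iff]; omega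
      have p2 : Even (m+2) := by rw [Nat.even_iff]; omega
      have p3 : ¬ Even (m+3) := by rw [Nat.even_iff]; omega
      have p4 : Even (m+4) := by rw [Nat.even_iff]; omega
      have p5 : ¬ Even (m+5) := by rw [Nat.even_iff]; omega
      refine jt_congr ?_ ?_ ?_ <;>
      · rw [← @Int.cast_inj ℚ]
        push_cast [c0_cast, c2_cast, c3_cast]
        simp only [pN, p1, p2, p3, p4, p5, hm, ite_true, ite_false, if_true, if_false,
          eq_self_iff_true, not_true, not_false_iff]
        ring1
    · replace hm : ¬ Even m := Nat.not_even_iff_odd.mpr hm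
      have key : m % 2 = 1 := Nat.odd_iff.mp (Nat.not_even_iff_odd.mp hm)
      have p1 : Even (m+1) := by rw [Nat.even_iff]; omega
      have p2 : ¬ Even (m+2) := by rw [Nat.even_iff]; omega
      have p3 : Even (m+3) := by rw [Nat.even_iff]; omega
      have p4 : ¬ Even (m+4) := by rw [Nat.even_iff]; omega
      have p5 : Even (m+5) := by rw [Nat.even_iff]; omega
      refine jt_congr ?_ ?_ ?_ <;>
      · rw [← @Int.cast_inj ℚ]
        push_cast [c0_cast, c2_cast, c3_cast]
        simp only [pN, p1, p2, p3, p4, p5, hm, ite_true, ite_false, if_true, if_false,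
          eq_self_iff_true, not_true, not_false_iff]
        ring1
  | odd m h1 h2 h3 h4 =>
    have pM : ¬ Even (2*(m+2)+1) := by rw [Nat.even_iff]; omega
    have hD1 := (expD_rec m).2.1
    have hD2 := (expD_rec m).2.2
    rw [preΨ'_odd]
    rcases Nat.even_or_odd m with hm | hm
    · rw [if_pos hm] at hD1
      rw [if_pos hm] at hD2
      rw [if_pos hm, if_pos hm, mul_one]
      have d31 : expD (2*(m+2)+1)
          = expD (m+4) + expD (m+2) + expD (m+2) + expD (m+2) + (3 + 3) := by omega
      have d32 : expD (2*(m+2)+1)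
          = expD (m+1) + expD (m+3) + expD (m+3) + expD (m+3) := by omega
      rw [reflect_sub', map_sub,
        show W0.preΨ' (m+4) * W0.preΨ' (m+2) ^ 3 * W0.Ψ₂Sq ^ 2
          = W0.preΨ' (m+4) * W0.preΨ' (m+2) * W0.preΨ' (m+2) * W0.preΨ' (m+2)
            * (W0.Ψ₂Sq * W0.Ψ₂Sq) by ring,
        show W0.preΨ' (m+1) * W0.preΨ' (m+3) ^ 3
          = W0.preΨ' (m+1) * W0.preΨ' (m+3) * W0.preΨ' (m+3) * W0.preΨ' (m+3) by ring,
        prm (natDegree_mul_le_of_le (natDegree_mul_le_of_le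
          (natDegree_mul_le_of_le (bdd _) (bdd _)) (bdd _)) (bdd _))
          (natDegree_mul_le_of_le W0.natDegree_Ψ₂Sq_le W0.natDegree_Ψ₂Sq_le) d31,
        prm (natDegree_mul_le_of_le (natDegree_mul_le_of_le (bdd _) (bdd _)) (bdd _)) (bdd _) rfl,
        prm (natDegree_mul_le_of_le (bdd _) (bdd _)) (bdd _) rfl,
        prm (bdd _) (bdd _) rfl,
        prm W0.natDegree_Ψ₂Sq_le W0.natDegree_Ψ₂Sq_le rfl,
        prm (natDegree_mul_le_of_le (natDegree_mul_le_of_le (bdd _) (bdd _)) (bdd _)) (bdd _) d32,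
        prm (natDegree_mul_le_of_le (bdd _) (bdd _)) (bdd _) rfl,
        prm (bdd _) (bdd _) rfl,
        h1, h2, h3, h4, rpsi2]
      simp only [jt_mul, jt_sub]
      have key : m % 2 = 0 := Nat.even_iff.mp hm
      have p1 : ¬ Even (m+1) := by rw [Nat.even_iff]; omega
      have p2 : Even (m+2) := by rw [Nat.even_iff]; omega
      have p3 : ¬ Even (m+3) := by rw [Nat.even_iff]; omega
      have p4 : Even (m+4) := by rw [Nat.even_iff]; omega
      refine jt_congr ?_ ?_ ?_ <;>
      · rw [← @Int.cast_inj ℚ]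
        push_cast [c0_cast, c2_cast, c3_cast]
        simp only [pM, p1, p2, p3, p4, hm, ite_true, ite_false, if_true, if_false,
          eq_self_iff_true, not_true, not_false_iff]
        ring1
    · replace hm : ¬ Even m := Nat.not_even_iff_odd.mpr hm
      rw [if_neg hm] at hD1
      rw [if_neg hm] at hD2
      rw [if_neg hm, if_neg hm, mul_one]
      have d31 : expD (2*(m+2)+1)
          = expD (m+4) + expD (m+2) + expD (m+2) + expD (m+2) := by omega
      have d32 : expD (2*(m+2)+1)
          = expD (m+1) + expD (m+3) + expD (m+3) + expD (m+3) + (3 + 3) := by omega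
      rw [reflect_sub', map_sub,
        show W0.preΨ' (m+4) * W0.preΨ' (m+2) ^ 3
          = W0.preΨ' (m+4) * W0.preΨ' (m+2) * W0.preΨ' (m+2) * W0.preΨ' (m+2) by ring,
        show W0.preΨ' (m+1) * W0.preΨ' (m+3) ^ 3 * W0.Ψ₂Sq ^ 2
          = W0.preΨ' (m+1) * W0.preΨ' (m+3) * W0.preΨ' (m+3) * W0.preΨ' (m+3)
            * (W0.Ψ₂Sq * W0.Ψ₂Sq) by ring,
        prm (natDegree_mul_le_of_le (natDegree_mul_le_of_le (bdd _) (bdd _)) (bdd _)) (bdd _) d31,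
        prm (natDegree_mul_le_of_le (bdd _) (bdd _)) (bdd _) rfl,
        prm (bdd _) (bdd _) rfl,
        prm (natDegree_mul_le_of_le (natDegree_mul_le_of_le
          (natDegree_mul_le_of_le (bdd _) (bdd _)) (bdd _)) (bdd _))
          (natDegree_mul_le_of_le W0.natDegree_Ψ₂Sq_le W0.natDegree_Ψ₂Sq_le) d32,
        prm (natDegree_mul_le_of_le (natDegree_mul_le_of_le (bdd _) (bdd _)) (bdd _)) (bdd _) rfl,
        prm (natDegree_mul_le_of_le (bdd _) (bdd _)) (bdd _) rfl,
        prm (bdd _) (bdd _) rfl,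
        prm W0.natDegree_Ψ₂Sq_le W0.natDegree_Ψ₂Sq_le rfl,
        h1, h2, h3, h4, rpsi2]
      simp only [jt_mul, jt_sub]
      have key : m % 2 = 1 := Nat.odd_iff.mp (Nat.not_even_iff_odd.mp hm)
      have p1 : Even (m+1) := by rw [Nat.even_iff]; omega
      have p2 : ¬ Even (m+2) := by rw [Nat.even_iff]; omega
      have p3 : Even (m+3) := by rw [Nat.even_iff]; omega
      have p4 : ¬ Even (m+4) := by rw [Nat.even_iff]; omega
      refine jt_congr ?_ ?_ ?_ <;>
      · rw [← @Int.cast_inj ℚ]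
        push_cast [c0_cast, c2_cast, c3_cast]
        simp only [pM, p1, p2, p3, p4, hm, ite_true, ite_false, if_true, if_false,
          eq_self_iff_true, not_true, not_false_iff]
        ring1

def e2p (k : ℕ) : ℤ := -((k : ℤ) ^ 2 * ((k : ℤ) ^ 2 - 1) / 6)
def e3p (k : ℕ) : ℤ := -(2 * (k : ℤ) ^ 2 * ((k : ℤ) ^ 4 - 1) / 15)

lemma e2p_cast (k : ℕ) : ((e2p k : ℤ) : ℚ) = -((k : ℚ) ^ 2 * ((k : ℚ) ^ 2 - 1) / 6) := by
  rw [e2p, Int.cast_neg, Int.cast_div_charZero (d6 (k : ℤ))]; push_cast; ring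

lemma e3p_cast (k : ℕ) : ((e3p k : ℤ) : ℚ) = -(2 * (k : ℚ) ^ 2 * ((k : ℚ) ^ 4 - 1) / 15) := by
  rw [e3p, Int.cast_neg, Int.cast_div_charZero (d15 (k : ℤ))]; push_cast; ring

lemma inv_phi (n : ℕ) :
    pim (reflect ((n + 2) ^ 2) (W0.Φ ((n : ℤ) + 2))) = jt 1 (e2p (n + 2)) (e3p (n + 2)) := by
  have hidx : ((n : ℤ) + 2) = ((n + 1 : ℕ) : ℤ) + 1 := by push_cast; ring
  rw [hidx, Φ_ofNat, show n + 1 + 1 = n + 2 from rfl, show n + 1 + 2 = n + 3 from rfl]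
  have hd1 := (expD_phi n).1
  have hd2 := (expD_phi n).2
  rcases Nat.even_or_odd (n + 1) with he | he
  · rw [if_pos he] at hd1
    rw [if_pos he] at hd2
    rw [if_pos he, if_pos he, mul_one]
    have da : (n + 2) ^ 2 = 1 + expD (n + 2) + expD (n + 2) := by omega
    have db : (n + 2) ^ 2 = expD (n + 3) + expD (n + 1) + 3 := by omega
    rw [reflect_sub', map_sub,
      show (X : Rab[X]) * W0.preΨ' (n + 2) ^ 2
        = X * W0.preΨ' (n + 2) * W0.preΨ' (n + 2) by ring,
      prm (natDegree_mul_le_of_le natDegree_X_le (bdd _)) (bdd _) da,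
      prm natDegree_X_le (bdd _) rfl,
      prm (natDegree_mul_le_of_le (bdd _) (bdd _)) W0.natDegree_Ψ₂Sq_le db,
      prm (bdd _) (bdd _) rfl,
      reflect_one_X, map_one, inv_pre, inv_pre, inv_pre, rpsi2]
    simp only [one_mul, jt_mul, jt_sub]
    have key : (n + 1) % 2 = 0 := Nat.even_iff.mp he
    have p2 : ¬ Even (n + 2) := by rw [Nat.even_iff]; omega
    have p3 : Even (n + 3) := by rw [Nat.even_iff]; omega
    refine jt_congr ?_ ?_ ?_ <;>
    · rw [← @Int.cast_inj ℚ]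
      push_cast [c0_cast, c2_cast, c3_cast, e2p_cast, e3p_cast]
      simp only [he, p2, p3, ite_true, ite_false, if_true, if_false, not_true, not_false_iff]
      ring1
  · replace he : ¬ Even (n + 1) := Nat.not_even_iff_odd.mpr he
    rw [if_neg he] at hd1
    rw [if_neg he] at hd2
    rw [if_neg he, if_neg he, mul_one]
    have da : (n + 2) ^ 2 = 1 + expD (n + 2) + expD (n + 2) + 3 := by omega
    have db : (n + 2) ^ 2 = expD (n + 3) + expD (n + 1) := by omega
    rw [reflect_sub', map_sub,
      show (X : Rab[X]) * W0.preΨ' (n + 2) ^ 2 * W0.Ψ₂Sq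
        = X * W0.preΨ' (n + 2) * W0.preΨ' (n + 2) * W0.Ψ₂Sq by ring,
      prm (natDegree_mul_le_of_le (natDegree_mul_le_of_le natDegree_X_le (bdd _)) (bdd _))
        W0.natDegree_Ψ₂Sq_le da,
      prm (natDegree_mul_le_of_le natDegree_X_le (bdd _)) (bdd _) rfl,
      prm natDegree_X_le (bdd _) rfl,
      prm (bdd _) (bdd _) db,
      reflect_one_X, map_one, inv_pre, inv_pre, inv_pre, rpsi2]
    simp only [one_mul, jt_mul, jt_sub]
    have key : (n + 1) % 2 = 1 := Nat.odd_iff.mp (Nat.not_even_iff_odd.mp he)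
    have p2 : Even (n + 2) := by rw [Nat.even_iff]; omega
    have p3 : ¬ Even (n + 3) := by rw [Nat.even_iff]; omega
    refine jt_congr ?_ ?_ ?_ <;>
    · rw [← @Int.cast_inj ℚ]
      push_cast [c0_cast, c2_cast, c3_cast, e2p_cast, e3p_cast]
      simp only [he, p2, p3, ite_true, ite_false, if_true, if_false, not_true, not_false_iff]
      ring1

lemma coeff_phi (n : ℕ) :
    (W0.Φ ((n : ℤ) + 2)).coeff ((n + 2) ^ 2 - 2) = ((e2p (n + 2) : ℤ) : Rab) * va := by
  set Q : Rab[X] := 1 + C (((e2p (n + 2) : ℤ) : Rab) * va) * X ^ 2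
    + C (((e3p (n + 2) : ℤ) : Rab) * vb) * X ^ 3 with hQdef
  have hQ : pim Q = jt 1 (e2p (n + 2)) (e3p (n + 2)) := by
    rw [hQdef]
    simp only [map_add, map_mul, map_pow, map_one, map_intCast, pim_X, jt, al, be]
    push_cast
    ring
  have hdvd : (X : Rab[X]) ^ 4 ∣ reflect ((n + 2) ^ 2) (W0.Φ ((n : ℤ) + 2)) - Q :=
    AdjoinRoot.mk_eq_mk.mp ((inv_phi n).trans hQ.symm)
  have h2 := X_pow_dvd_iff.mp hdvd 2 (by norm_num)
  rw [coeff_sub, sub_eq_zero] at h2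
  have hrev : (2 : ℕ) ≤ (n + 2) ^ 2 :=
    le_trans (by norm_num) (Nat.pow_le_pow_left (by omega : 2 ≤ n + 2) 2)
  rw [coeff_reflect, revAt_le hrev] at h2
  rw [h2, hQdef]
  simp only [coeff_add, coeff_one, coeff_C_mul, coeff_X_pow]
  norm_num

lemma main (n : ℕ) (hn : 0 < n) :
    (W0.Φ (n : ℤ)).Monic ∧ (W0.Φ (n : ℤ)).natDegree = n ^ 2 ∧
      (W0.Φ (n : ℤ)).coeff (n ^ 2 - 2) = -(((n ^ 2 * (n ^ 2 - 1) / 6 : ℕ) : Rab)) * va := by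
  refine ⟨W0.leadingCoeff_Φ (n : ℤ), by simpa using W0.natDegree_Φ (n : ℤ), ?_⟩
  rcases n with _ | _ | m
  · omega
  · rw [show (((1 : ℕ) : ℤ)) = 1 from rfl, Φ_one]
    norm_num
  · have h := coeff_phi m
    rw [show ((m + 2 : ℕ) : ℤ) = (m : ℤ) + 2 by push_cast; ring]
    rw [h]
    have hcast : ((e2p (m + 2) : ℤ) : Rab)
        = -((((m + 2) ^ 2 * ((m + 2) ^ 2 - 1) / 6 : ℕ) : Rab)) := by
      have hsq : 1 ≤ (m + 2) ^ 2 := by nlinarith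
      have hdvd6 : 6 ∣ (m + 2) ^ 2 * ((m + 2) ^ 2 - 1) := by
        have hd := d6 ((m + 2 : ℕ) : ℤ)
        have hcast : (((m + 2) ^ 2 * ((m + 2) ^ 2 - 1) : ℕ) : ℤ)
            = ((m + 2 : ℕ) : ℤ) ^ 2 * (((m + 2 : ℕ) : ℤ) ^ 2 - 1) := by
          push_cast [Nat.cast_sub hsq]; ring
        have h6 : (6 : ℤ) ∣ (((m + 2) ^ 2 * ((m + 2) ^ 2 - 1) : ℕ) : ℤ) := by
          rw [hcast]; exact hd
        exact_mod_cast h6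
      have hz : e2p (m + 2) = -(((m + 2) ^ 2 * ((m + 2) ^ 2 - 1) / 6 : ℕ) : ℤ) := by
        rw [← @Int.cast_inj ℚ, e2p_cast, Int.cast_neg, Int.cast_natCast,
          Nat.cast_div hdvd6 (by norm_num : (6 : ℚ) ≠ 0), Nat.cast_mul, Nat.cast_sub hsq,
          Nat.cast_pow]
        push_cast
        ring
      rw [hz, Int.cast_neg, Int.cast_natCast]
    rw [hcast]

end PhiAux

/-- For every positive `n`, the polynomial `φₙ = x·ψₙ² − ψₙ₋₁ψₙ₊₁` of `y² = x³ + ax + b`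
(after substituting `y² = x³ + ax + b`), namely `WeierstrassCurve.Φ n ∈ ℤ[a,b][x]`,
is monic of degree `n²` and its coefficient of `x^(n²-2)` equals `−(n²(n²-1)/6)·a`. -/
theorem phi_monic_degree_coeff
    (a b : Rab) (ha : a = MvPolynomial.X true) (hb : b = MvPolynomial.X false)
    (W : WeierstrassCurve Rab)
    (hW : W = { a₁ := 0, a₂ := 0, a₃ := 0, a₄ := a, a₆ := b })
    (n : ℕ) (hn : 0 < n) :
    (W.Φ (n : ℤ)).Monic ∧ (W.Φ (n : ℤ)).natDegree = n ^ 2 ∧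
      (W.Φ (n : ℤ)).coeff (n ^ 2 - 2) =
        -(((n ^ 2 * (n ^ 2 - 1) / 6 : ℕ) : Rab)) * a := by
  subst ha hb hW
  exact PhiAux.main n hn
end

section
/- Let L = ℤω₁ + ℤω₂ be a lattice in ℂ with ℘ its Weierstrass function, and let n be a positive integer. For every z ∈ ℂ with nz ∉ L, the identity Σ_{j,k=0}^{n−1} ℘((z + jω₁ + kω₂)/n) = n² ℘(z) holds. -/
open scoped BigOperators

/-- The Weierstrass `℘`-function attached to the lattice `L = ℤω₁ + ℤω₂`:
`℘(z) = 1/z² + Σ_{ω ∈ L, ω ≠ 0} (1/(z-ω)² − 1/ω²)`. -/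
noncomputable def wp (ω₁ ω₂ : ℂ) (z : ℂ) : ℂ :=
  1 / z ^ 2 + ∑' p : ℤ × ℤ,
    if p = 0 then 0 else
      (1 / (z - (p.1 * ω₁ + p.2 * ω₂)) ^ 2 - 1 / (p.1 * ω₁ + p.2 * ω₂) ^ 2)

/-- The lattice `L = ℤω₁ + ℤω₂ ⊆ ℂ`. -/
def lat (ω₁ ω₂ : ℂ) : Set ℂ := {w | ∃ m k : ℤ, w = m * ω₁ + k * ω₂}

namespace WpAux

open Filter Finset

/-- The lattice point attached to `p`. -/
noncomputable def lpt (a b : ℂ) (p : ℤ × ℤ) : ℂ := p.1 * a + p.2 * b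

/-- The regularized summand of the `℘`-series. -/
noncomputable def fterm (a b w : ℂ) (p : ℤ × ℤ) : ℂ :=
  1 / (w - lpt a b p) ^ 2 - 1 / lpt a b p ^ 2

/-- The sum of `1/(u-ka)²` over a row. -/
noncomputable def Rrow (a u : ℂ) : ℂ := ∑' k : ℤ, 1 / (u - (k : ℂ) * a) ^ 2

/-- Row constants. -/
noncomputable def Cc (a b : ℂ) (m : ℤ) : ℂ := ∑' k : ℤ, 1 / ((k : ℂ) * a + (m : ℂ) * b) ^ 2

lemma lpt_zero (a b : ℂ) : lpt a b 0 = 0 := by simp [lpt]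

/-- Summability on `ℤ` from an `O(k⁻²)` bound. -/
lemma summable_int_decay (f : ℤ → ℂ) (C : ℝ) (N : ℕ)
    (h : ∀ k : ℤ, N ≤ k.natAbs → ‖f k‖ ≤ C / (k.natAbs : ℝ) ^ 2) : Summable f := by
  have hg0 : Summable (fun n : ℕ => C * (1 / (n : ℝ) ^ 2)) :=
    (Real.summable_one_div_nat_pow.mpr one_lt_two).mul_left C
  have hg : Summable (fun k : ℤ => C / (k.natAbs : ℝ) ^ 2) := by
    apply Summable.of_nat_of_neg
    · exact hg0.congr (by intro n; simp [div_eq_mul_inv])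
    · refine hg0.congr (by intro n; simp [div_eq_mul_inv])
  apply Summable.of_norm
  apply hg.of_norm_bounded_eventually
  rw [Filter.eventually_cofinite]
  apply Set.Finite.subset (Set.finite_Icc (-(N : ℤ)) N)
  intro k hk
  simp only [Set.mem_setOf_eq, not_le, norm_norm] at hk
  by_contra hmem
  simp only [Set.mem_Icc, not_and_or, not_le] at hmem
  have : N ≤ k.natAbs := by omega
  exact absurd (h k this) (by simpa using hk.not_ge)

/-- `Σ 1/(c-kα)²` converges. -/
lemma summable_one_div_linear_sq (c α : ℂ) (hα : α ≠ 0) :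
    Summable (fun k : ℤ => 1 / (c - (k : ℂ) * α) ^ 2) := by
  have hα' : 0 < ‖α‖ := norm_pos_iff.mpr hα
  set N : ℕ := ⌈2 * ‖c‖ / ‖α‖⌉₊ + 1 with hN
  apply summable_int_decay _ (4 / ‖α‖ ^ 2) N
  intro k hk
  set M : ℝ := (k.natAbs : ℝ) with hM
  have hM1 : (1 : ℝ) ≤ M := by
    have : 1 ≤ k.natAbs := le_trans (by omega) hk
    rw [hM]; exact_mod_cast this
  have hM0 : (0:ℝ) < M := by linarith
  have hkc : 2 * ‖c‖ / ‖α‖ ≤ M := by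
    have h1 : (⌈2 * ‖c‖ / ‖α‖⌉₊ : ℝ) ≤ M := by
      have : ⌈2 * ‖c‖ / ‖α‖⌉₊ ≤ k.natAbs := by omega
      rw [hM]; exact_mod_cast this
    linarith [Nat.le_ceil (2 * ‖c‖ / ‖α‖)]
  have hckk : 2 * ‖c‖ ≤ M * ‖α‖ := by
    rw [div_le_iff₀ hα'] at hkc; linarith
  have hnormk : ‖(k : ℂ)‖ = M := by
    rw [hM, Nat.cast_natAbs]
    simp
  have hlow : M * ‖α‖ / 2 ≤ ‖c - (k : ℂ) * α‖ := by
    have h1 : ‖(k : ℂ) * α‖ - ‖c‖ ≤ ‖c - (k : ℂ) * α‖ := by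
      calc ‖(k : ℂ) * α‖ - ‖c‖ ≤ ‖(k : ℂ) * α - c‖ := norm_sub_norm_le _ _
        _ = ‖c - (k : ℂ) * α‖ := by rw [norm_sub_rev]
    have h2 : ‖(k : ℂ) * α‖ = M * ‖α‖ := by rw [norm_mul, hnormk]
    linarith
  have hpos : (0:ℝ) < M * ‖α‖ / 2 := by
    apply div_pos (mul_pos hM0 hα') two_pos
  rw [norm_div, norm_one, norm_pow]
  have h1 : (M * ‖α‖ / 2) ^ 2 ≤ ‖c - (k : ℂ) * α‖ ^ 2 :=
    pow_le_pow_left₀ (le_of_lt hpos) hlow 2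
  have h2 : (0:ℝ) < (M * ‖α‖ / 2) ^ 2 := pow_pos hpos 2
  calc 1 / ‖c - (k : ℂ) * α‖ ^ 2 ≤ 1 / (M * ‖α‖ / 2) ^ 2 := by
        apply one_div_le_one_div_of_le h2 h1
    _ = 4 / ‖α‖ ^ 2 / M ^ 2 := by
        field_simp
        ring

/-- `Σ 1/((c-kα)(d-kα))` converges. -/
lemma summable_one_div_linear_mul (c d α : ℂ) (hα : α ≠ 0) :
    Summable (fun k : ℤ => 1 / ((c - (k : ℂ) * α) * (d - (k : ℂ) * α))) := by
  have hα' : 0 < ‖α‖ := norm_pos_iff.mpr hα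
  set N : ℕ := ⌈2 * ‖c‖ / ‖α‖⌉₊ + ⌈2 * ‖d‖ / ‖α‖⌉₊ + 1 with hN
  apply summable_int_decay _ (4 / ‖α‖ ^ 2) N
  intro k hk
  set M : ℝ := (k.natAbs : ℝ) with hM
  have hM1 : (1 : ℝ) ≤ M := by
    have : 1 ≤ k.natAbs := le_trans (by omega) hk
    rw [hM]; exact_mod_cast this
  have hM0 : (0:ℝ) < M := by linarith
  have hnormk : ‖(k : ℂ)‖ = M := by
    rw [hM, Nat.cast_natAbs]
    simp
  have hlow : ∀ e : ℂ, 2 * ‖e‖ / ‖α‖ ≤ M → M * ‖α‖ / 2 ≤ ‖e - (k : ℂ) * α‖ := by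
    intro e he
    have h1 : ‖(k : ℂ) * α‖ - ‖e‖ ≤ ‖e - (k : ℂ) * α‖ := by
      calc ‖(k : ℂ) * α‖ - ‖e‖ ≤ ‖(k : ℂ) * α - e‖ := norm_sub_norm_le _ _
        _ = ‖e - (k : ℂ) * α‖ := by rw [norm_sub_rev]
    have h2 : ‖(k : ℂ) * α‖ = M * ‖α‖ := by rw [norm_mul, hnormk]
    rw [div_le_iff₀ hα'] at he
    nlinarith
  have hc : M * ‖α‖ / 2 ≤ ‖c - (k : ℂ) * α‖ := by
    apply hlow c
    have h1 : (⌈2 * ‖c‖ / ‖α‖⌉₊ : ℝ) ≤ M := by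
      have : ⌈2 * ‖c‖ / ‖α‖⌉₊ ≤ k.natAbs := by omega
      rw [hM]; exact_mod_cast this
    linarith [Nat.le_ceil (2 * ‖c‖ / ‖α‖)]
  have hd : M * ‖α‖ / 2 ≤ ‖d - (k : ℂ) * α‖ := by
    apply hlow d
    have h1 : (⌈2 * ‖d‖ / ‖α‖⌉₊ : ℝ) ≤ M := by
      have : ⌈2 * ‖d‖ / ‖α‖⌉₊ ≤ k.natAbs := by omega
      rw [hM]; exact_mod_cast this
    linarith [Nat.le_ceil (2 * ‖d‖ / ‖α‖)]
  have hpos : (0:ℝ) < M * ‖α‖ / 2 := by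
    apply div_pos (mul_pos hM0 hα') two_pos
  rw [norm_div, norm_one, norm_mul]
  have h1 : (M * ‖α‖ / 2) * (M * ‖α‖ / 2) ≤ ‖c - (k : ℂ) * α‖ * ‖d - (k : ℂ) * α‖ :=
    mul_le_mul hc hd (le_of_lt hpos) (le_trans (le_of_lt hpos) hc)
  have h2 : (0:ℝ) < (M * ‖α‖ / 2) * (M * ‖α‖ / 2) := mul_pos hpos hpos
  calc 1 / (‖c - (k : ℂ) * α‖ * ‖d - (k : ℂ) * α‖)
      ≤ 1 / ((M * ‖α‖ / 2) * (M * ‖α‖ / 2)) := one_div_le_one_div_of_le h2 h1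
    _ = 4 / ‖α‖ ^ 2 / M ^ 2 := by
        field_simp
        ring

lemma sqrt_pow_eq (x : ℝ) (hx : 0 ≤ x) : (Real.sqrt x) ^ 3 = x ^ ((3:ℝ)/2) := by
  rw [Real.sqrt_eq_rpow, ← Real.rpow_natCast (x ^ ((1:ℝ)/2)) 3, ← Real.rpow_mul hx]
  norm_num

/-- The one-dimensional `(1+|k|)^{-3/2}` family is summable on `ℤ`. -/
lemma summable_gg : Summable (fun k : ℤ => ((Real.sqrt (1 + k.natAbs)) ^ 3)⁻¹) := by
  have h0 : Summable (fun n : ℕ => ((n : ℝ) ^ ((3 : ℝ) / 2))⁻¹) := by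
    rw [Real.summable_nat_rpow_inv]; norm_num
  have h1 : Summable (fun n : ℕ => ((Real.sqrt (1 + n)) ^ 3)⁻¹) := by
    have h2 := h0.comp_injective (add_right_injective 1)
    apply h2.congr
    intro n
    simp only [Function.comp_apply]
    congr 1
    rw [sqrt_pow_eq _ (by positivity)]
    congr 1
    push_cast; ring
  apply Summable.of_nat_of_neg
  · exact h1.congr (by intro n; simp)
  · exact h1.congr (by intro n; simp)

/-- Summability on `ℤ²` from an `O(‖p‖⁻³)` bound in the sup norm. -/
lemma summable_two_dim_decay (f : ℤ × ℤ → ℂ) (C : ℝ) (N : ℕ)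
    (h : ∀ p : ℤ × ℤ, N ≤ max p.1.natAbs p.2.natAbs →
      ‖f p‖ ≤ C / ((max p.1.natAbs p.2.natAbs : ℕ) : ℝ) ^ 3) : Summable f := by
  have hC : 0 ≤ C := by
    by_contra hC0
    push_neg at hC0
    have h1 := h ((N:ℤ)+1, 0)
      (show N ≤ max ((N:ℤ)+1).natAbs (0:ℤ).natAbs by
        rw [Int.natAbs_zero, Nat.max_zero]; omega)
    have hmx : max ((N:ℤ)+1).natAbs (0:ℤ).natAbs = N+1 := by
      rw [Int.natAbs_zero, Nat.max_zero]; omega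
    rw [hmx] at h1
    have hpos : (0:ℝ) < ((N+1:ℕ):ℝ)^3 := by positivity
    have hneg : C / ((N+1:ℕ):ℝ)^3 < 0 := div_neg_of_neg_of_pos hC0 hpos
    nlinarith [norm_nonneg (f ((N:ℤ)+1, 0))]
  have hgg := summable_gg
  set gg : ℤ → ℝ := fun k => ((Real.sqrt (1 + k.natAbs)) ^ 3)⁻¹ with hggdef
  have hggnn : (0 : ℤ → ℝ) ≤ gg := by
    refine Pi.le_def.mpr fun k => ?_
    have h0 : (0:ℝ) ≤ ((Real.sqrt (1 + k.natAbs)) ^ 3)⁻¹ := by positivity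
    simpa [hggdef] using h0
  have hprod : Summable (fun p : ℤ × ℤ => (8 * C) * (gg p.1 * gg p.2)) :=
    (hgg.mul_of_nonneg hgg hggnn hggnn).mul_left _
  -- the main bound
  have hbound : ∀ p : ℤ × ℤ, N ≤ max p.1.natAbs p.2.natAbs →
      ‖f p‖ ≤ (8 * C) * (gg p.1 * gg p.2) := by
    intro p hbig
    have hb := h p hbig
    set m : ℕ := max p.1.natAbs p.2.natAbs with hm
    by_cases hm0 : m = 0
    · have : ‖f p‖ ≤ 0 := by
        rw [hm0] at hb; simpa using hb
      calc ‖f p‖ ≤ 0 := this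
        _ ≤ _ := by positivity
    · have hm1 : (1:ℝ) ≤ (m:ℝ) := by
        have : 1 ≤ m := by omega
        exact_mod_cast this
      set A : ℝ := 1 + p.1.natAbs with hA
      set B : ℝ := 1 + p.2.natAbs with hB
      have hA1 : (1:ℝ) ≤ A := by
        rw [hA]
        have : (0:ℝ) ≤ (p.1.natAbs : ℝ) := by positivity
        linarith
      have hB1 : (1:ℝ) ≤ B := by
        rw [hB]
        have : (0:ℝ) ≤ (p.2.natAbs : ℝ) := by positivity
        linarith
      have hAm : A ≤ 2 * m := by
        have h1 : p.1.natAbs ≤ m := le_max_left _ _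
        have h2 : (p.1.natAbs : ℝ) ≤ (m:ℝ) := by exact_mod_cast h1
        rw [hA]; linarith
      have hBm : B ≤ 2 * m := by
        have h1 : p.2.natAbs ≤ m := le_max_right _ _
        have h2 : (p.2.natAbs : ℝ) ≤ (m:ℝ) := by exact_mod_cast h1
        rw [hB]; linarith
      have hsqrt : Real.sqrt A * Real.sqrt B ≤ 2 * m := by
        rw [← Real.sqrt_mul (by linarith)]
        calc Real.sqrt (A * B) ≤ Real.sqrt ((2*(m:ℝ)) * (2*m)) := by
              apply Real.sqrt_le_sqrt
              apply mul_le_mul hAm hBm (by linarith) (by linarith)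
          _ = 2 * m := by
              rw [show (2*(m:ℝ)) * (2*m) = (2*m)^2 by ring]
              exact Real.sqrt_sq (by linarith)
      have hcube : (Real.sqrt A * Real.sqrt B) ^ 3 ≤ (2*(m:ℝ)) ^ 3 := by
        apply pow_le_pow_left₀ (by positivity) hsqrt
      have hcubepos : (0:ℝ) < (Real.sqrt A * Real.sqrt B) ^ 3 := by
        have h1 : (1:ℝ) ≤ Real.sqrt A := by
          rw [show (1:ℝ) = Real.sqrt 1 by simp]
          exact Real.sqrt_le_sqrt hA1
        have h2 : (1:ℝ) ≤ Real.sqrt B := by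
          rw [show (1:ℝ) = Real.sqrt 1 by simp]
          exact Real.sqrt_le_sqrt hB1
        positivity
      have hkey : (1:ℝ) / (8 * (m:ℝ)^3) ≤ gg p.1 * gg p.2 := by
        have heq : gg p.1 * gg p.2 = ((Real.sqrt A * Real.sqrt B) ^ 3)⁻¹ := by
          rw [hggdef]
          simp only []
          rw [mul_pow, mul_inv]
        rw [heq]
        rw [one_div]
        apply inv_anti₀ hcubepos
        calc (Real.sqrt A * Real.sqrt B) ^ 3 ≤ (2*(m:ℝ))^3 := hcube
          _ = 8 * (m:ℝ)^3 := by ring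
      calc ‖f p‖ ≤ C / (m : ℝ) ^ 3 := hb
        _ = (8 * C) * ((1:ℝ) / (8 * (m : ℝ) ^ 3)) := by
            field_simp
        _ ≤ (8 * C) * (gg p.1 * gg p.2) := by
            apply mul_le_mul_of_nonneg_left hkey (by positivity)
  apply Summable.of_norm
  apply hprod.of_norm_bounded_eventually
  rw [Filter.eventually_cofinite]
  apply Set.Finite.subset ((Set.finite_Icc (-(N:ℤ)) N).prod (Set.finite_Icc (-(N:ℤ)) N))
  intro p hp
  simp only [Set.mem_setOf_eq, norm_norm] at hp
  rw [Set.mem_prod, Set.mem_Icc, Set.mem_Icc]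
  by_cases hble : N ≤ max p.1.natAbs p.2.natAbs
  · exact absurd (hbound p hble) hp
  · rw [not_le, Nat.max_lt] at hble
    omega

/-- Telescoping sums over `ℤ` vanish. -/
lemma tsum_telescope_zero (v : ℤ → ℂ)
    (hs : Summable (fun k : ℤ => v k - v (k + 1)))
    (h1 : Tendsto (fun N : ℕ => v N) atTop (nhds 0))
    (h2 : Tendsto (fun N : ℕ => v (-(N : ℤ))) atTop (nhds 0)) :
    ∑' k : ℤ, (v k - v (k + 1)) = 0 := by
  have hicc : ∀ N : ℕ, ∑ k ∈ Finset.Icc (-(N : ℤ)) N, (v k - v (k + 1))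
      = v (-(N : ℤ)) - v ((N : ℤ) + 1) := by
    intro N
    have hmap : Finset.Icc (-(N : ℤ)) N =
        (Finset.range (2 * N + 1)).map
          (⟨fun i : ℕ => (i : ℤ) - (N : ℤ), (show Function.Injective (fun i : ℕ => (i : ℤ) - (N : ℤ)) from by intro i j hij; simp only [sub_left_inj, Nat.cast_inj] at hij; exact hij)⟩ : ℕ ↪ ℤ) := by
      ext x
      simp only [Finset.mem_Icc, Finset.mem_map, Finset.mem_range, Function.Embedding.coeFn_mk]
      constructor
      · intro hx
        refine ⟨(x + N).toNat, by omega, by omega⟩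
      · rintro ⟨i, hi, rfl⟩; omega
    rw [hmap, Finset.sum_map]
    simp only [Function.Embedding.coeFn_mk]
    have := Finset.sum_range_sub' (fun i : ℕ => v ((i : ℤ) - N)) (2 * N + 1)
    calc ∑ i ∈ Finset.range (2 * N + 1), (v ((i:ℤ) - N) - v ((i:ℤ) - N + 1))
        = ∑ i ∈ Finset.range (2 * N + 1),
            ((fun i : ℕ => v ((i : ℤ) - N)) i - (fun i : ℕ => v ((i : ℤ) - N)) (i + 1)) := by
          apply Finset.sum_congr rfl
          intro i _
          rw [show ((i:ℤ) - (N:ℤ) + 1) = ((i+1:ℕ):ℤ) - (N:ℤ) by omega]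
      _ = v ((0:ℤ) - N) - v ((2 * N + 1 : ℕ) - N) := this
      _ = v (-(N : ℤ)) - v ((N : ℤ) + 1) := by
          have e1 : (0:ℤ) - N = -(N:ℤ) := by ring
          have e2 : ((2 * N + 1 : ℕ) : ℤ) - N = (N:ℤ) + 1 := by push_cast; ring
          rw [e1, e2]
  have hIccTop : Tendsto (fun N : ℕ => Finset.Icc (-(N : ℤ)) (N : ℤ)) atTop atTop := by
    apply Filter.tendsto_atTop_finset_of_monotone
    · intro N M hNM
      apply Finset.Icc_subset_Icc <;> omega
    · intro x
      exact ⟨x.natAbs, by rw [Finset.mem_Icc]; omega⟩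
  have hS := hs.hasSum
  have hcomp : Tendsto (fun N : ℕ => ∑ k ∈ Finset.Icc (-(N : ℤ)) N, (v k - v (k + 1)))
      atTop (nhds (∑' k : ℤ, (v k - v (k + 1)))) := hS.comp hIccTop
  have hlim : Tendsto (fun N : ℕ => v (-(N : ℤ)) - v ((N : ℤ) + 1)) atTop (nhds 0) := by
    have h1' : Tendsto (fun N : ℕ => v ((N : ℤ) + 1)) atTop (nhds 0) := by
      have := h1.comp (tendsto_add_atTop_nat 1)
      apply this.congr
      intro N
      simp only [Function.comp_apply]
      norm_cast
    simpa using h2.sub h1'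
  have : Tendsto (fun N : ℕ => v (-(N : ℤ)) - v ((N : ℤ) + 1)) atTop
      (nhds (∑' k : ℤ, (v k - v (k + 1)))) := by
    apply hcomp.congr
    intro N; exact hicc N
  exact tendsto_nhds_unique this hlim

/-- Rows of a summable family on `ℤ²` (fibered over the second coordinate). -/
lemma hasSum_rows (F : ℤ × ℤ → ℂ) (h : Summable F) :
    HasSum (fun m : ℤ => ∑' k : ℤ, F (k, m)) (∑' p : ℤ × ℤ, F p) := by
  have h' : Summable (fun q : ℤ × ℤ => F (q.2, q.1)) := by
    have := h.prod_symm
    apply this.congr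
    intro q; rfl
  have hrows : ∀ m : ℤ, HasSum (fun k : ℤ => F (k, m)) (∑' k : ℤ, F (k, m)) := by
    intro m
    exact (h'.prod_factor m).hasSum
  have := h'.hasSum.prod_fiberwise (g := fun m => ∑' k : ℤ, F (k, m)) hrows
  convert this using 1
  exact ((Equiv.prodComm ℤ ℤ).tsum_eq F).symm

section Pair

variable (a b : ℂ) (δ : ℝ)

/-- The summability bound hypothesis for the pair `(a, b)`. -/
def Bnd : Prop :=
  0 < δ ∧ ∀ p : ℤ × ℤ, δ * ((max p.1.natAbs p.2.natAbs : ℕ) : ℝ) ≤ ‖lpt a b p‖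

variable {a b δ}

lemma Bnd.a_ne_zero (hb : Bnd a b δ) : a ≠ 0 := by
  intro h0
  have := hb.2 (1, 0)
  simp [lpt, h0] at this
  linarith [hb.1]

lemma Bnd.lpt_ne_zero (hb : Bnd a b δ) {p : ℤ × ℤ} (hp : p ≠ 0) : lpt a b p ≠ 0 := by
  intro h0
  have h1 := hb.2 p
  rw [h0, norm_zero] at h1
  have h2 : 1 ≤ max p.1.natAbs p.2.natAbs := by
    have hne : p.1 ≠ 0 ∨ p.2 ≠ 0 := by
      by_contra hc
      push_neg at hc
      exact hp (Prod.ext hc.1 hc.2)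
    omega
  have : (0:ℝ) < δ * ((max p.1.natAbs p.2.natAbs : ℕ) : ℝ) := by
    apply mul_pos hb.1
    exact_mod_cast h2
  linarith

/-- The regularized `℘`-summand family is summable. -/
lemma Bnd.summable_fterm (hb : Bnd a b δ) (w : ℂ) : Summable (fterm a b w) := by
  obtain ⟨hδ, hB⟩ := hb
  set N : ℕ := ⌈(2 * ‖w‖ + 2) / δ⌉₊ + 1 with hN
  apply summable_two_dim_decay _ (12 * ‖w‖ / δ ^ 3) N
  intro p hp
  set m : ℕ := max p.1.natAbs p.2.natAbs with hm
  have hm1 : 1 ≤ m := by omega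
  have hmR : (1:ℝ) ≤ (m:ℝ) := by exact_mod_cast hm1
  have hNm : ((N:ℕ):ℝ) ≤ (m:ℝ) := by exact_mod_cast hp
  have hδm : 2 * ‖w‖ + 2 ≤ δ * m := by
    have h1 : (2 * ‖w‖ + 2) / δ ≤ (N : ℝ) := by
      rw [hN]; push_cast
      linarith [Nat.le_ceil ((2 * ‖w‖ + 2) / δ)]
    calc 2 * ‖w‖ + 2 = ((2 * ‖w‖ + 2) / δ) * δ := by field_simp
      _ ≤ (m : ℝ) * δ := by
          apply mul_le_mul_of_nonneg_right _ (le_of_lt hδ)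
          linarith
      _ = δ * m := by ring
  have hL : 2 * ‖w‖ + 2 ≤ ‖lpt a b p‖ := le_trans hδm (hB p)
  have hLm : δ * m ≤ ‖lpt a b p‖ := hB p
  have hL0 : lpt a b p ≠ 0 := by
    intro h; rw [h, norm_zero] at hL; linarith [norm_nonneg w]
  have hwhalf : ‖w‖ ≤ ‖lpt a b p‖ / 2 := by linarith
  have hwL : ‖lpt a b p‖ / 2 ≤ ‖w - lpt a b p‖ := by
    have h1 : ‖lpt a b p‖ - ‖w‖ ≤ ‖w - lpt a b p‖ := by
      calc ‖lpt a b p‖ - ‖w‖ ≤ ‖lpt a b p - w‖ := norm_sub_norm_le _ _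
        _ = ‖w - lpt a b p‖ := norm_sub_rev _ _
    linarith
  have hwL0 : w - lpt a b p ≠ 0 := by
    intro h; rw [h, norm_zero] at hwL; nlinarith [norm_nonneg (lpt a b p)]
  have key : fterm a b w p = w * (2 * lpt a b p - w) / ((w - lpt a b p) ^ 2 * lpt a b p ^ 2) := by
    unfold fterm
    field_simp
    ring
  rw [key]
  have hLpos : 0 < ‖lpt a b p‖ := norm_pos_iff.mpr hL0
  have hnum : ‖w * (2 * lpt a b p - w)‖ ≤ ‖w‖ * (3 * ‖lpt a b p‖) := by
    rw [norm_mul]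
    apply mul_le_mul_of_nonneg_left _ (norm_nonneg w)
    calc ‖2 * lpt a b p - w‖ ≤ ‖2 * lpt a b p‖ + ‖w‖ := norm_sub_le _ _
      _ = 2 * ‖lpt a b p‖ + ‖w‖ := by rw [norm_mul]; simp
      _ ≤ 3 * ‖lpt a b p‖ := by linarith
  have hden : (‖lpt a b p‖/2)^2 * ‖lpt a b p‖^2 ≤ ‖(w - lpt a b p) ^ 2 * lpt a b p ^ 2‖ := by
    rw [norm_mul, norm_pow, norm_pow]
    apply mul_le_mul_of_nonneg_right _ (by positivity)
    apply pow_le_pow_left₀ (by positivity) hwL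
  rw [norm_div]
  have hdenpos : (0:ℝ) < (‖lpt a b p‖/2)^2 * ‖lpt a b p‖^2 := by positivity
  calc ‖w * (2 * lpt a b p - w)‖ / ‖(w - lpt a b p) ^ 2 * lpt a b p ^ 2‖
      ≤ (‖w‖ * (3 * ‖lpt a b p‖)) / ((‖lpt a b p‖/2)^2 * ‖lpt a b p‖^2) := by
        apply div_le_div₀ (by positivity) hnum hdenpos hden
    _ = 12 * ‖w‖ / ‖lpt a b p‖ ^ 3 := by
        rw [div_eq_div_iff (ne_of_gt hdenpos) (ne_of_gt (pow_pos hLpos 3))]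
        ring
    _ ≤ 12 * ‖w‖ / (δ * m) ^ 3 := by
        apply div_le_div_of_nonneg_left (by positivity) (by positivity)
        apply pow_le_pow_left₀ (by positivity) hLm
    _ = 12 * ‖w‖ / δ ^ 3 / (m:ℝ) ^ 3 := by
        rw [mul_pow]; ring
  done

/-- The telescoped constant family. -/
noncomputable def Dd (a b : ℂ) (p : ℤ × ℤ) : ℂ :=
  if p.2 = 0 then 0 else a / ((lpt a b p) ^ 2 * (lpt a b p + a))

lemma Bnd.summable_Dd (hb : Bnd a b δ) : Summable (Dd a b) := by
  obtain ⟨hδ, hB⟩ := hb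
  apply summable_two_dim_decay _ (2 * ‖a‖ / δ ^ 3) 2
  intro p hp
  by_cases h2 : p.2 = 0
  · simp only [Dd, h2, if_true]
    rw [norm_zero]
    positivity
  · simp only [Dd, h2, if_false]
    set m : ℕ := max p.1.natAbs p.2.natAbs with hm
    have hmR : (2:ℝ) ≤ (m:ℝ) := by exact_mod_cast hp
    have hL : δ * m ≤ ‖lpt a b p‖ := hB p
    have hL' : δ * (max (p.1+1).natAbs p.2.natAbs : ℕ) ≤ ‖lpt a b p + a‖ := by
      have := hB (p.1 + 1, p.2)
      simpa [lpt, add_mul, add_assoc, add_comm, add_left_comm] using this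
    have hmm : (m:ℝ) - 1 ≤ ((max (p.1+1).natAbs p.2.natAbs : ℕ) : ℝ) := by
      have : m - 1 ≤ max (p.1+1).natAbs p.2.natAbs := by omega
      have h' : ((m - 1 : ℕ) : ℝ) ≤ ((max (p.1+1).natAbs p.2.natAbs : ℕ) : ℝ) := by
        exact_mod_cast this
      have h'' : ((m - 1 : ℕ) : ℝ) = (m:ℝ) - 1 := by
        have : 1 ≤ m := by omega
        push_cast [this]; ring
      linarith
    have hL2 : δ * ((m:ℝ)/2) ≤ ‖lpt a b p + a‖ := by
      calc δ * ((m:ℝ)/2) ≤ δ * ((m:ℝ) - 1) := by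
            apply mul_le_mul_of_nonneg_left _ (le_of_lt hδ)
            linarith
        _ ≤ δ * ((max (p.1+1).natAbs p.2.natAbs : ℕ) : ℝ) := by
            apply mul_le_mul_of_nonneg_left hmm (le_of_lt hδ)
        _ ≤ ‖lpt a b p + a‖ := hL'
    rw [norm_div]
    have hd1 : (0:ℝ) < δ * m := by positivity
    have hd2 : (0:ℝ) < δ * ((m:ℝ)/2) := by positivity
    have hden : (δ*m)^2 * (δ*((m:ℝ)/2)) ≤ ‖(lpt a b p) ^ 2 * (lpt a b p + a)‖ := by
      rw [norm_mul, norm_pow]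
      apply mul_le_mul
      · apply pow_le_pow_left₀ (le_of_lt hd1) hL
      · exact hL2
      · exact le_of_lt hd2
      · positivity
    calc ‖a‖ / ‖(lpt a b p) ^ 2 * (lpt a b p + a)‖
        ≤ ‖a‖ / ((δ*m)^2 * (δ*((m:ℝ)/2))) := by
          apply div_le_div_of_nonneg_left (norm_nonneg a) (by positivity) hden
      _ = 2 * ‖a‖ / δ ^ 3 / (m:ℝ) ^ 3 := by
          field_simp

lemma Bnd.summable_Cc_row (hb : Bnd a b δ) (m : ℤ) :
    Summable (fun k : ℤ => 1 / ((k : ℂ) * a + (m : ℂ) * b) ^ 2) := by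
  have := summable_one_div_linear_sq ((m : ℂ) * b) (-a) (neg_ne_zero.mpr hb.a_ne_zero)
  apply this.congr
  intro k
  congr 2
  ring

lemma Bnd.summable_Rrow_fam (hb : Bnd a b δ) (w : ℂ) (m : ℤ) :
    Summable (fun k : ℤ => 1 / ((w - (m : ℂ) * b) - (k : ℂ) * a) ^ 2) :=
  summable_one_div_linear_sq _ _ hb.a_ne_zero

/-- Row decomposition of the `℘`-series. -/
lemma Bnd.row_eq (hb : Bnd a b δ) (w : ℂ) (m : ℤ) :
    ∑' k : ℤ, fterm a b w (k, m) = Rrow a (w - (m : ℂ) * b) - Cc a b m := by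
  have h1 := hb.summable_Rrow_fam w m
  have h2 := hb.summable_Cc_row m
  have key : ∀ k : ℤ, fterm a b w (k, m) =
      1 / ((w - (m : ℂ) * b) - (k : ℂ) * a) ^ 2 - 1 / ((k : ℂ) * a + (m : ℂ) * b) ^ 2 := by
    intro k
    unfold fterm lpt
    simp only []
    congr 2
    ring
  calc ∑' k : ℤ, fterm a b w (k, m)
      = ∑' k : ℤ, (1 / ((w - (m : ℂ) * b) - (k : ℂ) * a) ^ 2
          - 1 / ((k : ℂ) * a + (m : ℂ) * b) ^ 2) := tsum_congr key
    _ = Rrow a (w - (m : ℂ) * b) - Cc a b m := Summable.tsum_sub h1 h2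

/-- For `m ≠ 0`, the row constant equals the telescoped row sum. -/
lemma Bnd.Cc_eq_Dd_row (hb : Bnd a b δ) {m : ℤ} (hm : m ≠ 0) :
    ∑' k : ℤ, Dd a b (k, m) = Cc a b m := by
  have ha := hb.a_ne_zero
  set x : ℤ → ℂ := fun k => (k : ℂ) * a + (m : ℂ) * b with hx
  have hx0 : ∀ k, x k ≠ 0 := by
    intro k
    have : lpt a b (k, m) ≠ 0 := hb.lpt_ne_zero (by simp [Prod.ext_iff, hm])
    simpa [lpt, hx] using this
  have hxa : ∀ k : ℤ, x k + a = x (k + 1) := by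
    intro k; simp only [hx]; push_cast; ring
  have hxa0 : ∀ k, x k + a ≠ 0 := by
    intro k; rw [hxa]; exact hx0 (k + 1)
  -- the telescoping family
  have ht2 : Summable (fun k : ℤ => 1 / (x k * (x k + a))) := by
    have := summable_one_div_linear_mul ((m : ℂ) * b) ((m : ℂ) * b + a) (-a)
      (neg_ne_zero.mpr ha)
    apply this.congr
    intro k
    congr 1
    simp only [hx]
    ring
  have htele : ∑' k : ℤ, (1 / (x k * (x k + a))) = 0 := by
    set v : ℤ → ℂ := fun k => 1 / (a * x k) with hv
    have hvk : ∀ k : ℤ, 1 / (x k * (x k + a)) = v k - v (k + 1) := by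
      intro k
      have hv0 : ∀ i : ℤ, v i = 1 / (a * x i) := fun _ => rfl
      rw [hv0 k, hv0 (k + 1), ← hxa k]
      have h2 := hx0 k
      have h3 := hxa0 k
      field_simp
      ring
    have hs : Summable (fun k : ℤ => v k - v (k + 1)) := by
      apply ht2.congr
      intro k; exact hvk k
    have hnorm : ∀ k : ℤ, k ≠ 0 → ‖v k‖ ≤ 1 / (‖a‖ * (δ * k.natAbs)) := by
      intro k hk
      have hxk : ‖x k‖ = ‖lpt a b (k, m)‖ := by
        simp only [hx, lpt]
      have hklow : δ * (k.natAbs : ℝ) ≤ ‖x k‖ := by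
        rw [hxk]
        calc δ * (k.natAbs : ℝ) ≤ δ * ((max k.natAbs m.natAbs : ℕ) : ℝ) := by
              apply mul_le_mul_of_nonneg_left _ (le_of_lt hb.1)
              exact_mod_cast le_max_left _ _
          _ ≤ ‖lpt a b (k, m)‖ := hb.2 (k, m)
      have hkpos : (0:ℝ) < δ * (k.natAbs : ℝ) := by
        apply mul_pos hb.1
        have h1 : 0 < k.natAbs := by omega
        exact_mod_cast h1
      have hapos : (0:ℝ) < ‖a‖ := norm_pos_iff.mpr ha
      have hveq : ‖v k‖ = 1 / (‖a‖ * ‖x k‖) := by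
        rw [hv]
        simp only [norm_div, norm_one, norm_mul]
      rw [hveq]
      apply one_div_le_one_div_of_le (mul_pos hapos hkpos)
      exact mul_le_mul_of_nonneg_left hklow (norm_nonneg a)
    have htends : Tendsto (fun N : ℕ => (1:ℝ) / (‖a‖ * δ) / N) atTop (nhds 0) :=
      tendsto_const_div_atTop_nhds_zero_nat _
    have h1 : Tendsto (fun N : ℕ => v (N : ℤ)) atTop (nhds 0) := by
      apply squeeze_zero_norm' _ htends
      filter_upwards [Filter.eventually_ge_atTop 1] with N hN
      calc ‖v (N:ℤ)‖ ≤ 1 / (‖a‖ * (δ * (N:ℤ).natAbs)) := hnorm _ (by exact_mod_cast Nat.one_le_iff_ne_zero.mp hN)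
        _ = 1 / (‖a‖ * δ) / N := by
            simp only [Int.natAbs_natCast]
            field_simp
      done
    have h2 : Tendsto (fun N : ℕ => v (-(N : ℤ))) atTop (nhds 0) := by
      apply squeeze_zero_norm' _ htends
      filter_upwards [Filter.eventually_ge_atTop 1] with N hN
      calc ‖v (-(N:ℤ))‖ ≤ 1 / (‖a‖ * (δ * (-(N:ℤ)).natAbs)) := hnorm _ (by omega)
        _ = 1 / (‖a‖ * δ) / N := by
            simp only [Int.natAbs_neg, Int.natAbs_natCast]
            field_simp
      done
    calc ∑' k : ℤ, (1 / (x k * (x k + a))) = ∑' k : ℤ, (v k - v (k + 1)) := tsum_congr hvk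
      _ = 0 := tsum_telescope_zero v hs h1 h2
  have ht1 : Summable (fun k : ℤ => 1 / (x k) ^ 2) := hb.summable_Cc_row m
  have hDrow : ∀ k : ℤ, Dd a b (k, m) = 1 / (x k) ^ 2 - 1 / (x k * (x k + a)) := by
    intro k
    have hD : Dd a b (k, m) = a / ((lpt a b (k, m)) ^ 2 * (lpt a b (k, m) + a)) := by
      unfold Dd
      exact if_neg hm
    have h1 : lpt a b (k, m) = x k := by simp [lpt, hx]
    rw [hD, h1]
    have h2 := hx0 k
    have h3 := hxa0 k
    field_simp
    ring
  calc ∑' k : ℤ, Dd a b (k, m)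
      = ∑' k : ℤ, (1 / (x k) ^ 2 - 1 / (x k * (x k + a))) := tsum_congr hDrow
    _ = (∑' k : ℤ, 1 / (x k) ^ 2) - ∑' k : ℤ, (1 / (x k * (x k + a))) := Summable.tsum_sub ht1 ht2
    _ = Cc a b m := by
        rw [htele, sub_zero]
        unfold Cc
        apply tsum_congr
        intro k
        simp only [hx]

/-- The row constants are summable. -/
lemma Bnd.summable_Cc (hb : Bnd a b δ) : Summable (Cc a b) := by
  have hD := hb.summable_Dd
  have hrows := hasSum_rows (Dd a b) hD
  have h1 : Summable (fun m : ℤ => ∑' k : ℤ, Dd a b (k, m)) := hrows.summable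
  have h2 : Summable (fun m : ℤ => if m = 0 then Cc a b 0 else 0) := by
    apply summable_of_ne_finset_zero (s := {0})
    intro m hm
    simp only [Finset.mem_singleton] at hm
    simp [hm]
  have key : Cc a b = (fun m : ℤ => ∑' k : ℤ, Dd a b (k, m)) +
      (fun m : ℤ => if m = 0 then Cc a b 0 else 0) := by
    funext m
    by_cases hm : m = 0
    · subst hm
      have : ∀ k : ℤ, Dd a b (k, 0) = 0 := by intro k; simp [Dd]
      simp [this, tsum_zero]
    · simp only [Pi.add_apply, hm, if_false, add_zero]
      exact (hb.Cc_eq_Dd_row hm).symm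
  rw [key]
  exact h1.add h2

/-- The row sums are summable. -/
lemma Bnd.summable_Rrow (hb : Bnd a b δ) (w : ℂ) :
    Summable (fun m : ℤ => Rrow a (w - (m : ℂ) * b)) := by
  have hF := hb.summable_fterm w
  have hrows := (hasSum_rows (fterm a b w) hF).summable
  have key : (fun m : ℤ => Rrow a (w - (m : ℂ) * b)) =
      (fun m : ℤ => ∑' k : ℤ, fterm a b w (k, m)) + Cc a b := by
    funext m
    simp only [Pi.add_apply, hb.row_eq w m]
    ring
  rw [key]
  exact hrows.add hb.summable_Cc

/-- Decomposition of the regularized lattice sum into row sums. -/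
lemma Bnd.tsum_fterm_eq (hb : Bnd a b δ) (w : ℂ) :
    ∑' p : ℤ × ℤ, fterm a b w p =
      (∑' m : ℤ, Rrow a (w - (m : ℂ) * b)) - ∑' m : ℤ, Cc a b m := by
  have hF := hb.summable_fterm w
  have hrows := hasSum_rows (fterm a b w) hF
  have h1 : ∑' p : ℤ × ℤ, fterm a b w p = ∑' m : ℤ, ∑' k : ℤ, fterm a b w (k, m) :=
    hrows.tsum_eq.symm
  rw [h1]
  calc ∑' m : ℤ, ∑' k : ℤ, fterm a b w (k, m)
      = ∑' m : ℤ, (Rrow a (w - (m : ℂ) * b) - Cc a b m) := tsum_congr (hb.row_eq w)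
    _ = (∑' m : ℤ, Rrow a (w - (m : ℂ) * b)) - ∑' m : ℤ, Cc a b m :=
        Summable.tsum_sub (hb.summable_Rrow w) hb.summable_Cc

end Pair

/-- `wp` as a regularized lattice sum. -/
lemma wp_eq_tsum_fterm {ω₁ ω₂ : ℂ} {δ : ℝ} (hb : Bnd ω₁ ω₂ δ) (w : ℂ) :
    wp ω₁ ω₂ w = ∑' p : ℤ × ℤ, fterm ω₁ ω₂ w p := by
  have hsingle : Summable (fun p : ℤ × ℤ => if p = 0 then 1 / w ^ 2 else 0) := by
    apply summable_of_ne_finset_zero (s := {0})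
    intro p hp
    simp only [Finset.mem_singleton] at hp
    simp [hp]
  have key : ∀ p : ℤ × ℤ,
      (if p = 0 then (0:ℂ) else
        (1 / (w - ((p.1 : ℂ) * ω₁ + (p.2 : ℂ) * ω₂)) ^ 2
          - 1 / ((p.1 : ℂ) * ω₁ + (p.2 : ℂ) * ω₂) ^ 2)) =
      fterm ω₁ ω₂ w p - (if p = 0 then 1 / w ^ 2 else 0) := by
    intro p
    by_cases hp : p = 0
    · subst hp
      simp [fterm, lpt]
    · simp [hp, fterm, lpt]
  unfold wp
  rw [tsum_congr key]
  rw [Summable.tsum_sub (hb.summable_fterm w) hsingle]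
  rw [tsum_ite_eq (0 : ℤ × ℤ) (fun _ => 1 / w ^ 2)]
  ring

/-- One-dimensional division identity for row sums. -/
lemma rowdiv (a : ℂ) (ha : a ≠ 0) (n : ℕ) (hn : 0 < n) (u : ℂ) :
    ∑ j ∈ Finset.range n, Rrow a ((u + (j : ℂ) * a) / n) = (n : ℂ) ^ 2 * Rrow a u := by
  haveI : NeZero n := ⟨hn.ne'⟩
  have hnC : (n : ℂ) ≠ 0 := by exact_mod_cast hn.ne'
  set G : ℤ → ℂ := fun K => 1 / (u - (K : ℂ) * a) ^ 2 with hG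
  have hGsum : Summable G := summable_one_div_linear_sq u a ha
  set H : ℤ → ℂ := fun K => G (-K) with hH
  have hHsum : Summable H := by
    rw [hH]
    exact (Equiv.neg ℤ).summable_iff.mpr hGsum |>.congr (fun K => rfl)
  set e : ℤ × Fin n ≃ ℤ := (Int.divModEquiv n).symm with he
  have hHe : Summable (fun x : ℤ × Fin n => H (e x)) := hHsum.comp_injective e.injective
  have step1 : ∀ j : ℕ, j < n →
      Rrow a ((u + (j : ℂ) * a) / n) = (n:ℂ)^2 * ∑' k : ℤ, H (k * n + (j:ℤ)) := by
    intro j hj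
    unfold Rrow
    have hterm : ∀ k : ℤ, 1 / ((u + (j : ℂ) * a) / n - (k : ℂ) * a) ^ 2
        = (n:ℂ)^2 * G ((n:ℤ) * k - (j:ℤ)) := by
      intro k
      have harg : (u + (j : ℂ) * a) / n - (k : ℂ) * a
          = (u - (((n:ℤ) * k - (j:ℤ) : ℤ) : ℂ) * a) / n := by
        push_cast
        field_simp
        ring
      show 1 / ((u + (j : ℂ) * a) / n - (k : ℂ) * a) ^ 2
          = (n:ℂ)^2 * (1 / (u - (((n:ℤ) * k - (j:ℤ) : ℤ) : ℂ) * a) ^ 2)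
      rw [harg, div_pow, one_div, one_div, inv_div, div_eq_mul_inv]
    rw [tsum_congr hterm, tsum_mul_left]
    congr 1
    -- reindex k ↦ -k
    have hneg : ∑' k : ℤ, G ((n:ℤ) * k - (j:ℤ)) = ∑' k : ℤ, G ((n:ℤ) * (-k) - (j:ℤ)) := by
      exact ((Equiv.neg ℤ).tsum_eq (fun k => G ((n:ℤ) * k - (j:ℤ)))).symm
    rw [hneg]
    apply tsum_congr
    intro k
    rw [hH]
    congr 1
    ring
  have step2 : ∑ j ∈ Finset.range n, ∑' k : ℤ, H (k * n + (j:ℤ)) = ∑' K : ℤ, H K := by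
    have h1 : ∑' K : ℤ, H K = ∑' x : ℤ × Fin n, H (e x) := (e.tsum_eq H).symm
    have h2 : ∑' x : ℤ × Fin n, H (e x) =
        ∑' y : Fin n × ℤ, H (e (y.2, y.1)) := by
      exact ((Equiv.prodComm (Fin n) ℤ).tsum_eq
        (fun x : ℤ × Fin n => H (e x))).symm
    have h3 : Summable (fun y : Fin n × ℤ => H (e (y.2, y.1))) := by
      apply hHe.comp_injective (i := fun y : Fin n × ℤ => (y.2, y.1))
      intro y y' hyy
      simpa [Prod.ext_iff, and_comm] using hyy
    rw [h1, h2, Summable.tsum_prod' h3 (fun j => h3.prod_factor j)]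
    rw [tsum_fintype]
    rw [Finset.sum_range]
    apply Finset.sum_congr rfl
    intro j _
    apply tsum_congr
    intro k
    congr 1
  calc ∑ j ∈ Finset.range n, Rrow a ((u + (j : ℂ) * a) / n)
      = ∑ j ∈ Finset.range n, (n:ℂ)^2 * ∑' k : ℤ, H (k * n + (j:ℤ)) := by
        apply Finset.sum_congr rfl
        intro j hj
        exact step1 j (Finset.mem_range.mp hj)
    _ = (n:ℂ)^2 * ∑ j ∈ Finset.range n, ∑' k : ℤ, H (k * n + (j:ℤ)) := by
        rw [Finset.mul_sum]
    _ = (n:ℂ)^2 * ∑' K : ℤ, H K := by rw [step2]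
    _ = (n:ℂ)^2 * Rrow a u := by
        congr 1
        have h4 : ∑' K : ℤ, H K = ∑' K : ℤ, G K := by
          have hne := (Equiv.neg ℤ).tsum_eq G
          rw [← hne]
          apply tsum_congr
          intro K
          simp only [hH, Equiv.neg_apply]
        rw [h4, hG]
        rfl

/-- Linear independence yields the lower bound `δ‖p‖ ≤ ‖p·(ω₁,ω₂)‖`. -/
lemma exists_bnd {ω₁ ω₂ : ℂ} (hindep : LinearIndependent ℝ ![ω₁, ω₂]) :
    ∃ δ : ℝ, Bnd ω₁ ω₂ δ := by
  classical
  set T : (Fin 2 → ℝ) →ₗ[ℝ] ℂ :=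
    { toFun := fun x => x 0 • ω₁ + x 1 • ω₂
      map_add' := by
        intro x y
        simp only [Pi.add_apply, add_smul]
        abel
      map_smul' := by
        intro c x
        simp only [Pi.smul_apply, smul_eq_mul, RingHom.id_apply, smul_smul, smul_add] } with hT
  have hker : LinearMap.ker T = ⊥ := by
    rw [LinearMap.ker_eq_bot']
    intro x hx
    have h := Fintype.linearIndependent_iff.mp hindep (fun i => x i)
    have hx' : ∑ i : Fin 2, x i • ![ω₁, ω₂] i = 0 := by
      rw [Fin.sum_univ_two]
      simpa [hT] using hx
    funext i
    exact h hx' i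
  obtain ⟨K, hK, hanti⟩ := T.exists_antilipschitzWith hker
  refine ⟨(K : ℝ)⁻¹, ⟨by positivity, ?_⟩⟩
  intro p
  set x : Fin 2 → ℝ := ![(p.1 : ℝ), (p.2 : ℝ)] with hxdef
  have hTx : T x = lpt ω₁ ω₂ p := by
    simp only [hT, LinearMap.coe_mk, AddHom.coe_mk, hxdef, lpt]
    simp [Complex.real_smul]
  have hx : ‖x‖ ≤ (K : ℝ) * ‖T x‖ := hanti.le_mul_norm (map_zero T) x
  have hmx : ((max p.1.natAbs p.2.natAbs : ℕ) : ℝ) ≤ ‖x‖ := by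
    have h0 : ‖x 0‖ ≤ ‖x‖ := norm_le_pi_norm x 0
    have h1 : ‖x 1‖ ≤ ‖x‖ := norm_le_pi_norm x 1
    have e0 : ‖x 0‖ = (p.1.natAbs : ℝ) := by
      rw [hxdef]
      simp only [Matrix.cons_val_zero]
      rw [Real.norm_eq_abs, Nat.cast_natAbs, Int.cast_abs]
    have e1 : ‖x 1‖ = (p.2.natAbs : ℝ) := by
      rw [hxdef]
      simp only [Matrix.cons_val_one, Matrix.head_cons, Matrix.cons_val_zero]
      rw [Real.norm_eq_abs, Nat.cast_natAbs, Int.cast_abs]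
    have : ((max p.1.natAbs p.2.natAbs : ℕ) : ℝ) = max (p.1.natAbs : ℝ) (p.2.natAbs : ℝ) := by
      push_cast; rfl
    rw [this]
    apply max_le <;> [rw [← e0]; rw [← e1]] <;> assumption
  have hKpos : (0:ℝ) < K := hK
  rw [← hTx]
  calc (K : ℝ)⁻¹ * ((max p.1.natAbs p.2.natAbs : ℕ) : ℝ)
      ≤ (K : ℝ)⁻¹ * ‖x‖ := by
        apply mul_le_mul_of_nonneg_left hmx (by positivity)
    _ ≤ (K : ℝ)⁻¹ * ((K : ℝ) * ‖T x‖) := by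
        apply mul_le_mul_of_nonneg_left hx (by positivity)
    _ = ‖T x‖ := by field_simp

end WpAux

/-- For every `z` with `nz ∉ L`, `Σ_{j,k=0}^{n-1} ℘((z + jω₁ + kω₂)/n) = n² ℘(z)`:
the sum of `℘` over the `n²` preimages of `z` under multiplication by `n` on `ℂ/L`. -/
theorem wp_division_points_sum (ω₁ ω₂ : ℂ)
    (hindep : LinearIndependent ℝ ![ω₁, ω₂])
    (n : ℕ) (hn : 0 < n) (z : ℂ) (hz : (n : ℂ) * z ∉ lat ω₁ ω₂) :
    ∑ j ∈ Finset.range n, ∑ k ∈ Finset.range n,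
        wp ω₁ ω₂ ((z + j * ω₁ + k * ω₂) / n) = n ^ 2 * wp ω₁ ω₂ z := by
  classical
  open WpAux in
  obtain ⟨δ, hb⟩ := WpAux.exists_bnd hindep
  haveI : NeZero n := ⟨hn.ne'⟩
  have hnC : (n : ℂ) ≠ 0 := by exact_mod_cast hn.ne'
  -- bound for the pair (ω₁, ω₂/n)
  have hb2 : WpAux.Bnd ω₁ (ω₂ / n) (δ / n) := by
    constructor
    · apply div_pos hb.1
      exact_mod_cast hn
    · intro p
      have h1 := hb.2 ((n : ℤ) * p.1, p.2)
      have harg : WpAux.lpt ω₁ (ω₂ / n) p = WpAux.lpt ω₁ ω₂ ((n : ℤ) * p.1, p.2) / n := by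
        simp only [WpAux.lpt]
        push_cast
        field_simp
      have hmax : max p.1.natAbs p.2.natAbs ≤ max ((n:ℤ) * p.1).natAbs p.2.natAbs := by
        have : p.1.natAbs ≤ ((n:ℤ) * p.1).natAbs := by
          rw [Int.natAbs_mul]
          have h1 : 0 < (n:ℤ).natAbs := by omega
          exact Nat.le_mul_of_pos_left _ h1
        omega
      rw [harg, norm_div]
      have hnR : (0:ℝ) < (n:ℝ) := by exact_mod_cast hn
      have : ‖(n : ℂ)‖ = (n : ℝ) := by
        simp [Complex.norm_natCast]
      rw [this]
      rw [div_mul_eq_mul_div, div_le_div_iff₀ hnR hnR]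
      calc δ * ((max p.1.natAbs p.2.natAbs : ℕ) : ℝ) * (n:ℝ)
          = δ * ((max p.1.natAbs p.2.natAbs : ℕ) : ℝ) * (n:ℝ) := rfl
        _ ≤ δ * ((max ((n:ℤ) * p.1).natAbs p.2.natAbs : ℕ) : ℝ) * (n:ℝ) := by
            have h2 : ((max p.1.natAbs p.2.natAbs : ℕ) : ℝ)
                ≤ ((max ((n:ℤ) * p.1).natAbs p.2.natAbs : ℕ) : ℝ) := by exact_mod_cast hmax
            have h3 := mul_le_mul_of_nonneg_left h2 (le_of_lt hb.1)
            exact mul_le_mul_of_nonneg_right h3 (le_of_lt hnR)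
        _ ≤ ‖WpAux.lpt ω₁ ω₂ ((n : ℤ) * p.1, p.2)‖ * (n:ℝ) := by
            exact mul_le_mul_of_nonneg_right h1 (le_of_lt hnR)
  set κ : ℂ := ∑' m : ℤ, WpAux.Cc ω₁ ω₂ m with hκ
  -- Step 1: expansion of each wp value
  have hwp : ∀ w : ℂ, wp ω₁ ω₂ w
      = (∑' m : ℤ, WpAux.Rrow ω₁ (w - (m : ℂ) * ω₂)) - κ := by
    intro w
    rw [WpAux.wp_eq_tsum_fterm hb w, hb.tsum_fterm_eq w, hκ]
  -- Step 2: per-j inner sum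
  have hj : ∀ j : ℕ, ∑ k ∈ Finset.range n, wp ω₁ ω₂ ((z + j * ω₁ + k * ω₂) / n)
      = (∑' K : ℤ, WpAux.Rrow ω₁ ((z + j * ω₁ - K * ω₂) / n)) - n * κ := by
    intro j
    set W : ℂ := (z + (j:ℂ) * ω₁) / n with hW
    set g : ℤ → ℂ := fun K => WpAux.Rrow ω₁ (W + (K : ℂ) * (ω₂ / n)) with hg
    have hgsum : Summable g := by
      have h0 := hb2.summable_Rrow W
      have hcomp : g = (fun m : ℤ => WpAux.Rrow ω₁ (W - (m : ℂ) * (ω₂ / n)))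
          ∘ (fun K : ℤ => -K) := by
        funext K
        simp only [Function.comp_apply, hg]
        congr 1
        push_cast
        ring
      rw [hcomp]
      exact h0.comp_injective neg_injective
    set e : ℤ × Fin n ≃ ℤ := (Int.divModEquiv n).symm with he
    have hge : Summable (fun x : ℤ × Fin n => g (e x)) := hgsum.comp_injective e.injective
    have hkey : ∀ k : ℕ, k < n →
        wp ω₁ ω₂ ((z + j * ω₁ + k * ω₂) / n) = (∑' m : ℤ, g (m * n + (k:ℤ))) - κ := by
      intro k hk
      rw [hwp]
      congr 1
      have hflip : ∑' m : ℤ, WpAux.Rrow ω₁ ((z + j * ω₁ + k * ω₂) / n - (m : ℂ) * ω₂)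
          = ∑' m : ℤ, WpAux.Rrow ω₁ ((z + j * ω₁ + k * ω₂) / n + (m : ℂ) * ω₂) := by
        have hcomp : (fun m : ℤ => WpAux.Rrow ω₁ ((z + j * ω₁ + k * ω₂) / n - (m : ℂ) * ω₂))
            = (fun m : ℤ => WpAux.Rrow ω₁ ((z + j * ω₁ + k * ω₂) / n + (m : ℂ) * ω₂))
              ∘ (fun m : ℤ => -m) := by
          funext m
          simp only [Function.comp_apply]
          congr 1
          push_cast
          ring
        rw [hcomp]
        exact (Equiv.neg ℤ).tsum_eq
          (fun m : ℤ => WpAux.Rrow ω₁ ((z + j * ω₁ + k * ω₂) / n + (m : ℂ) * ω₂))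
      rw [hflip]
      apply tsum_congr
      intro m
      rw [hg]
      simp only []
      congr 1
      rw [hW]
      push_cast
      field_simp
      try ring
    have hmerge : ∑ k ∈ Finset.range n, ∑' m : ℤ, g (m * n + (k:ℤ)) = ∑' K : ℤ, g K := by
      have h1 : ∑' K : ℤ, g K = ∑' x : ℤ × Fin n, g (e x) := (e.tsum_eq g).symm
      have h3 : Summable (fun y : Fin n × ℤ => g (e (y.2, y.1))) := by
        apply hge.comp_injective (i := fun y : Fin n × ℤ => (y.2, y.1))
        intro y y' hyy
        simpa [Prod.ext_iff, and_comm] using hyy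
      have h2 : ∑' x : ℤ × Fin n, g (e x) = ∑' y : Fin n × ℤ, g (e (y.2, y.1)) :=
        ((Equiv.prodComm (Fin n) ℤ).tsum_eq (fun x : ℤ × Fin n => g (e x))).symm
      rw [h1, h2, Summable.tsum_prod' h3 (fun i => h3.prod_factor i), tsum_fintype]
      rw [Finset.sum_range]
      apply Finset.sum_congr rfl
      intro i _
      apply tsum_congr
      intro m
      congr 1
    calc ∑ k ∈ Finset.range n, wp ω₁ ω₂ ((z + j * ω₁ + k * ω₂) / n)
        = ∑ k ∈ Finset.range n, ((∑' m : ℤ, g (m * n + (k:ℤ))) - κ) := by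
          apply Finset.sum_congr rfl
          intro k hk
          exact hkey k (Finset.mem_range.mp hk)
      _ = (∑ k ∈ Finset.range n, ∑' m : ℤ, g (m * n + (k:ℤ))) - n * κ := by
          rw [Finset.sum_sub_distrib, Finset.sum_const, Finset.card_range]
          simp [nsmul_eq_mul]
      _ = (∑' K : ℤ, g K) - n * κ := by rw [hmerge]
      _ = (∑' K : ℤ, WpAux.Rrow ω₁ ((z + j * ω₁ - K * ω₂) / n)) - n * κ := by
          congr 1
          have hflip : ∑' K : ℤ, g K = ∑' K : ℤ, g (-K) :=
            ((Equiv.neg ℤ).tsum_eq g).symm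
          rw [hflip]
          apply tsum_congr
          intro K
          rw [hg]
          simp only []
          congr 1
          rw [hW]
          push_cast
          field_simp
          try ring
  -- Step 3: assemble
  have hsumj : ∀ j : ℕ, Summable (fun K : ℤ => WpAux.Rrow ω₁ ((z + j * ω₁ - K * ω₂) / n)) := by
    intro j
    have h0 := hb2.summable_Rrow ((z + (j:ℂ) * ω₁) / n)
    apply h0.congr
    intro K
    congr 1
    push_cast
    field_simp
    try ring
  calc ∑ j ∈ Finset.range n, ∑ k ∈ Finset.range n, wp ω₁ ω₂ ((z + j * ω₁ + k * ω₂) / n)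
      = ∑ j ∈ Finset.range n,
          ((∑' K : ℤ, WpAux.Rrow ω₁ ((z + j * ω₁ - K * ω₂) / n)) - n * κ) := by
        apply Finset.sum_congr rfl
        intro j _
        exact hj j
    _ = (∑ j ∈ Finset.range n, ∑' K : ℤ, WpAux.Rrow ω₁ ((z + j * ω₁ - K * ω₂) / n))
          - n^2 * κ := by
        rw [Finset.sum_sub_distrib, Finset.sum_const, Finset.card_range]
        simp only [nsmul_eq_mul]
        congr 1
        ring
    _ = (∑' K : ℤ, ∑ j ∈ Finset.range n, WpAux.Rrow ω₁ ((z - K * ω₂ + j * ω₁) / n))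
          - n^2 * κ := by
        congr 1
        rw [← Summable.tsum_finsetSum (fun j _ => hsumj j)]
        apply tsum_congr
        intro K
        apply Finset.sum_congr rfl
        intro j _
        congr 2
        ring
    _ = (∑' K : ℤ, (n:ℂ)^2 * WpAux.Rrow ω₁ (z - K * ω₂)) - n^2 * κ := by
        congr 1
        apply tsum_congr
        intro K
        exact WpAux.rowdiv ω₁ hb.a_ne_zero n hn (z - K * ω₂)
    _ = (n:ℂ)^2 * ((∑' K : ℤ, WpAux.Rrow ω₁ (z - K * ω₂)) - κ) := by
        rw [tsum_mul_left]
        ring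
    _ = n ^ 2 * wp ω₁ ω₂ z := by
        rw [← hwp z]
end

section
/- Let L = ℤω₁ + ℤω₂ be a lattice in ℂ with Weierstrass function ℘, and let n be a positive integer. For every z ∈ ℂ with nz ∉ L, Σ_{j,k=0}^{n−1} ℘′((z + jω₁ + kω₂)/n) = n³ ℘′(z). -/
open scoped BigOperators

/-!
Mathlib's `℘'` is `-2 Σ_{l ∈ L} (w - l)⁻³`, an absolutely convergent series for every `w`.
Since `(w/n + l)³ = (w + n l)³ / n³`, the term `℘'((z + jω₁ + kω₂)/n)` is `n³` times the sum of
`-2 (z + l)⁻³` over the coset `jω₁ + kω₂ + nL`, and these `n²` cosets partition `L`.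
-/

open Finset

theorem Summable.sum_range_sum_range_tsum_mul_add {α : Type*} [AddCommGroup α] [UniformSpace α]
    [IsUniformAddGroup α] [CompleteSpace α] [T0Space α] {f : ℤ × ℤ → α} (hf : Summable f)
    {n : ℕ} (hn : n ≠ 0) :
    ∑ j ∈ range n, ∑ k ∈ range n, ∑' m : ℤ × ℤ, f (m.1 * n + j, m.2 * n + k) = ∑' q, f q := by
  have : NeZero n := ⟨hn⟩
  let e : Fin n × ℤ ≃ ℤ := (Equiv.prodComm _ _).trans (Int.divModEquiv n).symm
  let E : (Fin n × Fin n) × (ℤ × ℤ) ≃ ℤ × ℤ :=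
    (Equiv.prodProdProdComm _ _ _ _).trans (e.prodCongr e)
  calc ∑ j ∈ range n, ∑ k ∈ range n, ∑' m : ℤ × ℤ, f (m.1 * n + j, m.2 * n + k)
      = ∑' jk : Fin n × Fin n, ∑' m : ℤ × ℤ, f (E (jk, m)) := by
        simp only [tsum_fintype, Fintype.sum_prod_type, Finset.sum_range]
        rfl
    _ = ∑' x, f (E x) := ((E.summable_iff.mpr hf).tsum_prod).symm
    _ = ∑' q, f q := E.tsum_eq f

namespace PeriodPair

variable (L : PeriodPair)

theorem hasSum_weierstrassP_prod (z : ℂ) :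
    HasSum (fun p : ℤ × ℤ ↦ 1 / (z - (p.1 * L.ω₁ + p.2 * L.ω₂)) ^ 2 -
      1 / (p.1 * L.ω₁ + p.2 * L.ω₂) ^ 2) (L.weierstrassP z) := by
  convert L.latticeEquivProd.toEquiv.symm.hasSum_iff.mpr (L.hasSum_weierstrassP z) using 2 with p
  simp [← L.latticeEquiv_symm_apply]

theorem hasSum_derivWeierstrassP_add (z : ℂ) :
    HasSum (fun p : ℤ × ℤ ↦ -2 / (z + (p.1 * L.ω₁ + p.2 * L.ω₂)) ^ 3)
      (L.derivWeierstrassP z) := by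
  convert (L.latticeEquivProd.toEquiv.symm.trans (Equiv.neg _)).hasSum_iff.mpr
    (L.hasSum_derivWeierstrassP z) using 2 with p
  simp [← L.latticeEquiv_symm_apply, sub_eq_add_neg]

theorem derivWeierstrassP_div_natCast {n : ℕ} (hn : n ≠ 0) (w : ℂ) :
    L.derivWeierstrassP (w / n) =
      n ^ 3 * ∑' p : ℤ × ℤ, -2 / (w + ((p.1 * n : ℤ) * L.ω₁ + (p.2 * n : ℤ) * L.ω₂)) ^ 3 := by
  rw [← (L.hasSum_derivWeierstrassP_add _).tsum_eq, ← tsum_mul_left]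
  congr 1 with p
  have : (n : ℂ) ≠ 0 := by exact_mod_cast hn
  have hdiv : w / n + (p.1 * L.ω₁ + p.2 * L.ω₂) =
      (w + ((p.1 * n : ℤ) * L.ω₁ + (p.2 * n : ℤ) * L.ω₂)) / n := by
    push_cast
    field_simp
  rw [hdiv, div_pow, div_div_eq_mul_div]
  ring

theorem sum_derivWeierstrassP_div_natCast (n : ℕ) (z : ℂ) :
    ∑ j ∈ range n, ∑ k ∈ range n, L.derivWeierstrassP ((z + j * L.ω₁ + k * L.ω₂) / n) =
      n ^ 3 * L.derivWeierstrassP z := by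
  rcases eq_or_ne n 0 with rfl | hn
  · simp
  simp_rw [L.derivWeierstrassP_div_natCast hn, ← mul_sum]
  rw [← (L.hasSum_derivWeierstrassP_add z).tsum_eq,
    ← (L.hasSum_derivWeierstrassP_add z).summable.sum_range_sum_range_tsum_mul_add hn]
  refine congrArg _ (sum_congr rfl fun j _ ↦ sum_congr rfl fun k _ ↦ tsum_congr fun p ↦ ?_)
  congr 2
  push_cast
  ring

/-- The `p = 0` term of the series over `ℤ × ℤ` is `1 / z ^ 2 - 1 / 0 ^ 2 = 1 / z ^ 2`. -/
theorem wp_eq_weierstrassP : wp L.ω₁ L.ω₂ = L.weierstrassP := by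
  ext z
  rw [wp, (hasSum_ite_sub_hasSum (L.hasSum_weierstrassP_prod z) 0).tsum_eq]
  simp

end PeriodPair

theorem wp_deriv_division_points_sum_general (ω₁ ω₂ : ℂ)
    (hindep : LinearIndependent ℝ ![ω₁, ω₂])
    (n : ℕ) (z : ℂ) :
    ∑ j ∈ Finset.range n, ∑ k ∈ Finset.range n,
        deriv (wp ω₁ ω₂) ((z + j * ω₁ + k * ω₂) / n) = n ^ 3 * deriv (wp ω₁ ω₂) z := by
  let L : PeriodPair := ⟨ω₁, ω₂, hindep⟩
  rw [show wp ω₁ ω₂ = L.weierstrassP from L.wp_eq_weierstrassP, L.deriv_weierstrassP]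
  exact L.sum_derivWeierstrassP_div_natCast n z

/-- For every `z` with `nz ∉ L`, `Σ_{j,k=0}^{n-1} ℘′((z + jω₁ + kω₂)/n) = n³ ℘′(z)`:
the sum of `℘′` over the `n²` preimages of `z` under multiplication by `n` on `ℂ/L`. -/
theorem wp_deriv_division_points_sum (ω₁ ω₂ : ℂ)
    (hindep : LinearIndependent ℝ ![ω₁, ω₂])
    (n : ℕ) (hn : 0 < n) (z : ℂ) (hz : (n : ℂ) * z ∉ lat ω₁ ω₂) :
    ∑ j ∈ Finset.range n, ∑ k ∈ Finset.range n,
        deriv (wp ω₁ ω₂) ((z + j * ω₁ + k * ω₂) / n) = n ^ 3 * deriv (wp ω₁ ω₂) z :=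
  wp_deriv_division_points_sum_general ω₁ ω₂ hindep n z
end
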